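/- arXiv:2404.11393 — 5 statements merged into one kernel-verified Lean document; each statement's English description precedes it below -/
import Mathlib

section
/- Let A_Γ be an irreducible Artin group. Then the only standard parabolic subgroups of A_Γ that are normal in A_Γ are the trivial subgroup A_∅ = {1} and the whole group A_S = A_Γ. -/
/-!
Common framework: Artin groups of labelled graphs.

A finite labelled graph `Γ` on vertex set `α` is encoded by a symmetric function
`M : α → α → ℕ`, where `M s t = 0` means `s` and `t` are not joined by an edge
(label `∞`), and `M s t = m ≥ 2` means `s, t` are joined by an edge labelled `m`.
-/

namespace ArtinPaper

/-- The word `Π(s,t;m) = stst⋯` (`m` letters) in the free group. -/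
def braidWord {α : Type*} (m : ℕ) (s t : α) : FreeGroup α :=
  ((List.range m).map (fun i => if i % 2 = 0 then FreeGroup.of s else FreeGroup.of t)).prod

/-- The Artin relations of the labelled graph `M`: `Π(s,t;m_{s,t}) = Π(t,s;m_{s,t})`
for every edge `{s,t}` (i.e. whenever `2 ≤ M s t`). -/
def artinRels {α : Type*} (M : α → α → ℕ) : Set (FreeGroup α) :=
  { r | ∃ s t : α, 2 ≤ M s t ∧ r = braidWord (M s t) s t * (braidWord (M s t) t s)⁻¹ }

/-- The Artin group `A_Γ` of the labelled graph `M`. -/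
abbrev ArtinGroup {α : Type*} (M : α → α → ℕ) : Type _ :=
  PresentedGroup (artinRels M)

/-- The image in `A_Γ` of the generator `s`. -/
def agen {α : Type*} (M : α → α → ℕ) (s : α) : ArtinGroup M :=
  PresentedGroup.of s

/-- The standard parabolic subgroup `A_T` of `A_Γ`, for `T ⊆ S`. -/
def standardParabolic {α : Type*} (M : α → α → ℕ) (T : Set α) :
    Subgroup (ArtinGroup M) :=
  Subgroup.closure (agen M '' T)

/-- The conjugate `g H g⁻¹` of a subgroup. -/
def conjSub {G : Type*} [Group G] (g : G) (H : Subgroup G) : Subgroup G :=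
  H.map (MulAut.conj g).toMonoidHom

/-- A parabolic subgroup of `A_Γ` is a conjugate `g A_T g⁻¹` of a standard parabolic. -/
def IsParabolic {α : Type*} (M : α → α → ℕ) (H : Subgroup (ArtinGroup M)) : Prop :=
  ∃ (g : ArtinGroup M) (T : Set α), H = conjSub g (standardParabolic M T)

/-- A subgroup `H ≤ G` is weakly malnormal if some conjugate intersects it in a finite set. -/
def WeaklyMalnormal {G : Type*} [Group G] (H : Subgroup G) : Prop :=
  ∃ g : G, (((H ⊓ conjSub g H : Subgroup G) : Set G)).Finite

/-- `A_Γ` is reducible if `S` is partitioned into two nonempty parts joined entirely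
by edges labelled `2`. -/
def IsReducible {α : Type*} (M : α → α → ℕ) : Prop :=
  ∃ S₁ S₂ : Set α, S₁.Nonempty ∧ S₂.Nonempty ∧ Disjoint S₁ S₂ ∧
    S₁ ∪ S₂ = Set.univ ∧ ∀ s ∈ S₁, ∀ t ∈ S₂, M s t = 2

/-- The labelled graph induced on a subset `T` of the vertices. -/
def restrict {α : Type*} (M : α → α → ℕ) (T : Set α) : T → T → ℕ :=
  fun s t => M s t

/-- An Artin group satisfies the Intersection Property if the intersection of any two
of its parabolic subgroups is again a parabolic subgroup. -/
def SatisfiesIP {α : Type*} (M : α → α → ℕ) : Prop :=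
  ∀ H K : Subgroup (ArtinGroup M),
    IsParabolic M H → IsParabolic M K → IsParabolic M (H ⊓ K)

/-- A visual splitting `A_Γ = A_{Γ₁} *_{A_Ω} A_{Γ₂}`: two proper subsets of vertices
covering `S` such that each edge has both endpoints in `S₁` or both in `S₂`
(here `Ω = S₁ ∩ S₂`). -/
def VisualSplitting {α : Type*} (M : α → α → ℕ) (S₁ S₂ : Set α) : Prop :=
  S₁ ≠ Set.univ ∧ S₂ ≠ Set.univ ∧ S₁ ∪ S₂ = Set.univ ∧
    ∀ s t : α, 2 ≤ M s t → (s ∈ S₁ ∧ t ∈ S₁) ∨ (s ∈ S₂ ∧ t ∈ S₂)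

/-- `S₁` spans a direct factor of `A_Γ`: `∅ ≠ S₁ ⊊ S` and every vertex of `S₁` is joined
to every vertex of `S ∖ S₁` by an edge labelled `2`. -/
def IsDirectFactorSet {α : Type*} (M : α → α → ℕ) (S₁ : Set α) : Prop :=
  S₁.Nonempty ∧ S₁ ≠ Set.univ ∧ ∀ s ∈ S₁, ∀ t ∉ S₁, M s t = 2

/-- The Weak Malnormality Conjecture for `A_Γ`: a proper standard parabolic subgroup
is weakly malnormal iff it does not contain a standard parabolic subgroup that is a
direct factor of `A_Γ`. -/
def SatisfiesWMC {α : Type*} (M : α → α → ℕ) : Prop :=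
  ∀ T : Set α, T ≠ Set.univ →
    (WeaklyMalnormal (standardParabolic M T) ↔
      ¬ ∃ S₁ : Set α, IsDirectFactorSet M S₁ ∧
        standardParabolic M S₁ ≤ standardParabolic M T)

/-- The relations of the Coxeter group `W_Γ`: the Artin relations together with `s² = 1`. -/
def coxeterRels {α : Type*} (M : α → α → ℕ) : Set (FreeGroup α) :=
  artinRels M ∪ { r | ∃ s : α, r = FreeGroup.of s * FreeGroup.of s }

/-- The Coxeter group `W_Γ`, the quotient of `A_Γ` by the relations `s² = 1`. -/
abbrev CoxGroup {α : Type*} (M : α → α → ℕ) : Type _ :=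
  PresentedGroup (coxeterRels M)

end ArtinPaper
namespace ArtinPaper

namespace NP

set_option linter.unusedSectionVars false

/-- alternating product `abab⋯` (`m` letters) -/
def P {G : Type*} [Monoid G] (m : ℕ) (a b : G) : G :=
  ((List.range m).map (fun i => if i % 2 = 0 then a else b)).prod

section Grp
variable {G : Type*} [Group G]

lemma P_succ (m : ℕ) (a b : G) :
    P (m + 1) a b = P m a b * (if m % 2 = 0 then a else b) := by
  simp [P, List.range_succ]

lemma P_even (k : ℕ) (a b : G) : P (2 * k) a b = (a * b) ^ k := by
  induction k with
  | zero => simp [P]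
  | succ n ih =>
      have h1 : 2 * (n + 1) = (2 * n + 1) + 1 := by ring
      rw [h1, P_succ, P_succ, ih]
      have : (2 * n) % 2 = 0 := by omega
      rw [if_pos this]
      rw [if_neg (by omega)]
      rw [pow_succ, mul_assoc]

lemma P_odd (k : ℕ) (a b : G) : P (2 * k + 1) a b = (a * b) ^ k * a := by
  rw [P_succ, P_even, if_pos (by omega)]

lemma P_braid {m : ℕ} {a b : G} (ha : a * a = 1) (hb : b * b = 1)
    (h : (a * b) ^ m = 1) : P m a b = P m b a := by
  have hba : b * a = (a * b)⁻¹ := by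
    rw [eq_inv_iff_mul_eq_one]
    calc b * a * (a * b) = b * (a * a) * b := by group
    _ = 1 := by rw [ha, mul_one, hb]
  rcases Nat.even_or_odd m with ⟨k, hk⟩ | ⟨k, hk⟩
  · subst hk
    rw [show k + k = 2 * k by ring] at h ⊢
    rw [P_even, P_even, hba, inv_pow, eq_comm, inv_eq_iff_mul_eq_one, ← pow_add]
    rw [show k + k = 2 * k by ring]
    exact h
  · subst hk
    rw [P_odd, P_odd, hba, inv_pow]
    have h2 : (a * b) ^ (2 * k) = (a * b)⁻¹ := by
      rw [eq_inv_iff_mul_eq_one, ← pow_succ]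
      exact h
    have hainv : a⁻¹ = a := by rw [inv_eq_iff_mul_eq_one]; exact ha
    have hbinv : b⁻¹ = b := by rw [inv_eq_iff_mul_eq_one]; exact hb
    have : (a * b) ^ k * ((a * b) ^ k * a) = b := by
      rw [← mul_assoc, ← pow_add]
      have h3 : (a * b) ^ (k + k) = b * a := by
        rw [show k + k = 2*k by ring, h2, mul_inv_rev, hainv, hbinv]
      rw [h3, mul_assoc, ha, mul_one]
    calc (a * b) ^ k * a = ((a * b) ^ k)⁻¹ * ((a * b) ^ k * ((a * b) ^ k * a)) := by group
    _ = ((a * b) ^ k)⁻¹ * b := by rw [this]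

lemma lift_braidWord {α : Type*} (f : α → G) (m : ℕ) (s t : α) :
    FreeGroup.lift f (braidWord m s t) = P m (f s) (f t) := by
  unfold braidWord P
  rw [map_list_prod, List.map_map]
  apply congrArg
  apply List.map_congr_left
  intro i _
  simp only [Function.comp_apply, apply_ite (FreeGroup.lift f), FreeGroup.lift_apply_of]

end Grp

open scoped Classical

variable {α : Type*} [Fintype α]

/-- Coefficients of the Coxeter-type bilinear form. -/
noncomputable def K (M : α → α → ℕ) (u v : α) : ℝ :=
  if u = v then 2 else -2 * Real.cos (Real.pi / (M u v))

lemma K_self (M : α → α → ℕ) (u : α) : K M u u = 2 := if_pos rfl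

lemma K_ne (M : α → α → ℕ) {u v : α} (h : u ≠ v) :
    K M u v = -2 * Real.cos (Real.pi / (M u v)) := if_neg h

/-- standard basis vector -/
noncomputable def sing (u : α) : α → ℝ := fun w => if w = u then 1 else 0

lemma sing_self (u : α) : sing u u = 1 := if_pos rfl
lemma sing_ne {u w : α} (h : w ≠ u) : sing (α := α) u w = 0 := if_neg h

/-- the bilinear form against a basis vector -/
noncomputable def Bf (M : α → α → ℕ) (x : α → ℝ) (u : α) : ℝ := ∑ w, x w * K M w u

lemma Bf_add (M : α → α → ℕ) (x y : α → ℝ) (u : α) :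
    Bf M (x + y) u = Bf M x u + Bf M y u := by
  simp [Bf, add_mul, Finset.sum_add_distrib]

lemma Bf_sub (M : α → α → ℕ) (x y : α → ℝ) (u : α) :
    Bf M (x - y) u = Bf M x u - Bf M y u := by
  simp [Bf, sub_mul, Finset.sum_sub_distrib]

lemma Bf_smul (M : α → α → ℕ) (r : ℝ) (x : α → ℝ) (u : α) :
    Bf M (r • x) u = r * Bf M x u := by
  simp [Bf, Finset.mul_sum, mul_assoc]

lemma Bf_sing (M : α → α → ℕ) (u v : α) : Bf M (sing u) v = K M u v := by
  simp [Bf, sing, ite_mul]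

/-- The reflection associated to a generator. -/
noncomputable def refl (M : α → α → ℕ) (u : α) (x : α → ℝ) : α → ℝ :=
  x - (Bf M x u) • sing u

lemma refl_refl (M : α → α → ℕ) (u : α) (x : α → ℝ) : refl M u (refl M u x) = x := by
  unfold refl
  rw [Bf_sub, Bf_smul, Bf_sing, K_self]
  ring_nf
  module

/-- The reflection as a permutation. -/
noncomputable def rho (M : α → α → ℕ) (u : α) : Equiv.Perm (α → ℝ) :=
  ⟨refl M u, refl M u, refl_refl M u, refl_refl M u⟩

lemma rho_apply (M : α → α → ℕ) (u : α) (x : α → ℝ) : rho M u x = refl M u x := rfl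

lemma rho_sq (M : α → α → ℕ) (u : α) : rho M u * rho M u = 1 :=
  Equiv.ext fun x => refl_refl M u x

set_option maxHeartbeats 1000000

lemma step (M : α → α → ℕ) {u v : α} (huv : u ≠ v) {c : ℝ}
    (hKuv : K M u v = -c) (hKvu : K M v u = -c)
    (x : α → ℝ) (A B : ℝ) :
    refl M u (refl M v (x + A • sing u + B • sing v)) =
      x + ((c^2-1)*A - c*B - Bf M x u - c * Bf M x v) • sing u
        + (c*A - B - Bf M x v) • sing v := by
  unfold refl
  rw [Bf_add, Bf_add, Bf_smul, Bf_smul, Bf_sing, Bf_sing, hKuv, K_self]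
  rw [Bf_sub, Bf_add, Bf_add, Bf_smul, Bf_smul, Bf_smul, Bf_sing, Bf_sing]
  rw [K_self, hKvu]
  match_scalars <;> ring

/-- key lemma: the product of the two reflections attached to an edge labelled `m` has
order dividing `m`. -/
lemma rho_pow (M : α → α → ℕ) (hsym : ∀ s t, M s t = M t s) {u v : α} (huv : u ≠ v)
    (hm : 2 ≤ M u v) : (rho M u * rho M v) ^ (M u v) = 1 := by
  set m := M u v with hmdef
  set θ : ℝ := Real.pi / m with hθ
  set c : ℝ := 2 * Real.cos θ with hc
  have hKuv : K M u v = -c := by rw [K_ne M huv]; exact neg_mul 2 _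
  have hKvu : K M v u = -c := by
    rw [K_ne M huv.symm, hsym v u]; exact neg_mul 2 _
  have hm0 : (m:ℝ) ≠ 0 := by
    have : 0 < m := by omega
    exact_mod_cast this.ne'
  have hθpos : 0 < θ := by
    rw [hθ]
    apply div_pos Real.pi_pos
    exact_mod_cast (by omega : 0 < m)
  have hθle : θ ≤ Real.pi / 2 := by
    rw [hθ]
    apply div_le_div_of_nonneg_left Real.pi_pos.le (by norm_num)
    exact_mod_cast hm
  have hθltpi : θ < Real.pi := lt_of_le_of_lt hθle (by linarith [Real.pi_pos])
  have hsin : 0 < Real.sin θ := Real.sin_pos_of_pos_of_lt_pi hθpos hθltpi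
  set E : ℂ := Complex.exp (θ * Complex.I) with hE
  have hEne : E ≠ 0 := Complex.exp_ne_zero _
  have hEinv : E⁻¹ = Complex.exp (-(θ * Complex.I)) := by
    rw [hE, ← Complex.exp_neg]
  have hcC : (c : ℂ) = E + E⁻¹ := by
    rw [hc, hE, hEinv]
    push_cast
    rw [Complex.two_cos]
    rw [show (-(↑θ * Complex.I) : ℂ) = -↑θ * Complex.I by ring]
  have hE2 : E ^ 2 = Complex.exp (((2*θ : ℝ) : ℂ) * Complex.I) := by
    rw [sq, hE, ← Complex.exp_add]
    congr 1
    push_cast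
    ring
  have hω_ne : E ^ 2 - 1 ≠ 0 := by
    rw [sub_ne_zero]
    intro hω
    have h2 : Real.cos (2*θ) = 1 := by
      have h3 := congrArg Complex.re (hE2.symm.trans hω)
      rwa [Complex.exp_ofReal_mul_I_re, Complex.one_re] at h3
    rw [Real.cos_eq_one_iff_of_lt_of_lt (by linarith [Real.pi_pos])
      (by linarith [Real.pi_pos])] at h2
    linarith
  have hmθ : (m : ℝ) * θ = Real.pi := by rw [hθ]; field_simp
  have hmθC : ((m:ℕ):ℂ) * ((θ:ℝ):ℂ) = ((Real.pi : ℝ) : ℂ) := by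
    exact_mod_cast congrArg Complex.ofReal hmθ
  have hEm : E ^ (2 * m) = 1 := by
    have h4 : E ^ (2*m) = Complex.exp (((2 * Real.pi : ℝ) : ℂ) * Complex.I) := by
      rw [hE, ← Complex.exp_nat_mul]
      congr 1
      push_cast
      rw [← hmθC]
      push_cast
      ring
    rw [h4]
    have := Complex.exp_two_pi_mul_I
    rw [show ((2 * Real.pi : ℝ) : ℂ) * Complex.I = 2 * ↑Real.pi * Complex.I by push_cast; ring]
    exact this
  apply Equiv.ext
  intro x
  set p := Bf M x u with hp
  set q := Bf M x v with hq
  set d : ℂ := -(p:ℂ) - (q:ℂ) * E with hd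
  set k : ℂ := d / (E^2 - 1) with hk
  have hkd : (E^2 - 1) * k = d := by rw [hk]; field_simp
  have hEinv2 : E⁻¹ = (Real.cos θ : ℂ) - (Real.sin θ : ℂ) * Complex.I := by
    rw [hEinv, show (-(↑θ * Complex.I) : ℂ) = ((-θ : ℝ) : ℂ) * Complex.I by push_cast; ring,
      Complex.exp_mul_I, ← Complex.ofReal_cos, ← Complex.ofReal_sin]
    push_cast [Real.cos_neg, Real.sin_neg]
    ring
  have key : ∀ n : ℕ, ∃ A B : ℝ,
      ((rho M u * rho M v) ^ n) x = x + A • sing u + B • sing v ∧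
      ((A:ℂ) - (B:ℂ) * E⁻¹) = E^(2*n) * k - k := by
    intro n
    induction n with
    | zero => exact ⟨0, 0, by simp, by simp⟩
    | succ n ih =>
        obtain ⟨A, B, hv1, hc1⟩ := ih
        refine ⟨(c^2-1)*A - c*B - p - c*q, c*A - B - q, ?_, ?_⟩
        · rw [pow_succ', Equiv.Perm.mul_apply, hv1]
          have hgy : ∀ y, (rho M u * rho M v) y = refl M u (refl M v y) := fun y => rfl
          rw [hgy, step M huv hKuv hKvu, hp, hq]
        · have hpow : E ^ (2*(n+1)) = E ^ (2*n) * E^2 := by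
            rw [← pow_add]
            ring_nf
          have h5 : E ^ (2*(n+1)) * k - k = E^2 * ((A:ℂ) - (B:ℂ)*E⁻¹) + d := by
            rw [hc1, ← hkd, hpow]; ring
          rw [h5]
          push_cast
          rw [hcC, hd]
          have hEF : E * E⁻¹ = 1 := mul_inv_cancel₀ hEne
          linear_combination ((A:ℂ) + E * B) * hEF
  obtain ⟨A, B, hv1, hc1⟩ := key m
  rw [hEm] at hc1
  have hc2 : (A:ℂ) - (B:ℂ) * E⁻¹ = 0 := by rw [hc1]; ring
  rw [hEinv2] at hc2
  have him := congrArg Complex.im hc2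
  have hre := congrArg Complex.re hc2
  simp [Complex.sub_im, Complex.mul_im, Complex.sub_re, Complex.mul_re] at him hre
  have hB : B = 0 := by
    rcases him with h | h
    · exact h
    · exact absurd h hsin.ne'
  have hA : A = 0 := by
    rw [hB] at hre; simpa using hre
  rw [hA, hB] at hv1
  simpa using hv1

end NP

namespace NP

set_option linter.unusedSectionVars false
open scoped Classical

variable {α : Type*} [Fintype α]

lemma conj_eval (M : α → α → ℕ) {s t : α} (hts : t ≠ s) {c : ℝ}
    (hst : K M s t = -c) (htsK : K M t s = -c) (lam : ℝ) :
    refl M t (refl M s (refl M t (sing s + lam • sing t))) t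
      = c^3 - c^2*lam - 2*c + lam := by
  have h1 : refl M t (sing s + lam • sing t) = sing s + (c - lam) • sing t := by
    unfold refl
    simp only [Bf_add, Bf_smul, Bf_sing]
    rw [hst, K_self]
    module
  have h2 : refl M s (sing s + (c - lam) • sing t)
      = (c*(c-lam) - 1) • sing s + (c - lam) • sing t := by
    unfold refl
    simp only [Bf_add, Bf_smul, Bf_sing]
    rw [htsK, K_self]
    module
  have h3 : refl M t ((c*(c-lam) - 1) • sing s + (c - lam) • sing t)
      = (c*(c-lam) - 1) • sing s + (c*(c*(c-lam)-1) - (c - lam)) • sing t := by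
    unfold refl
    simp only [Bf_add, Bf_smul, Bf_sing]
    rw [hst, K_self]
    module
  rw [h1, h2, h3]
  simp only [Pi.add_apply, Pi.smul_apply, smul_eq_mul, sing_self, sing_ne hts]
  ring

end NP

/-- In an irreducible Artin group, the only normal standard parabolic
subgroups are the trivial subgroup `A_∅ = {1}` and the whole group `A_S = A_Γ`. -/
theorem normal_standardParabolic_of_irreducible {α : Type*} [Fintype α] (M : α → α → ℕ)
    (hsym : ∀ s t, M s t = M t s) (hdiag : ∀ s, M s s = 0)
    (hlab : ∀ s t, s ≠ t → M s t = 0 ∨ 2 ≤ M s t)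
    (hirr : ¬ IsReducible M)
    (T : Set α) (hnorm : (standardParabolic M T).Normal) :
    standardParabolic M T = ⊥ ∨ standardParabolic M T = ⊤ := by
  classical
  by_cases hTe : T = ∅
  · left
    rw [hTe, standardParabolic, Set.image_empty, Subgroup.closure_empty]
  by_cases hTu : T = Set.univ
  · right
    rw [hTu, standardParabolic, Set.image_univ]
    exact PresentedGroup.closure_range_of _
  exfalso
  obtain ⟨s, hsT, t, htT, hMst⟩ : ∃ s ∈ T, ∃ t ∉ T, M s t ≠ 2 := by
    by_contra hcon
    push_neg at hcon
    refine hirr ⟨T, Tᶜ, Set.nonempty_iff_ne_empty.mpr hTe, Set.nonempty_compl.mpr hTu,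
      disjoint_compl_right, Set.union_compl_self T, fun a ha b hb => hcon a ha b hb⟩
  have hst_ne : s ≠ t := fun h => htT (h ▸ hsT)
  have hrels : ∀ r ∈ artinRels M, FreeGroup.lift (NP.rho M) r = 1 := by
    rintro r ⟨a, b, hab, rfl⟩
    have hne : a ≠ b := by
      rintro rfl
      rw [hdiag] at hab
      omega
    rw [map_mul, map_inv, NP.lift_braidWord, NP.lift_braidWord, mul_inv_eq_one]
    exact NP.P_braid (NP.rho_sq M a) (NP.rho_sq M b) (NP.rho_pow M hsym hne hab)
  set φ : ArtinGroup M →* Equiv.Perm (α → ℝ) := PresentedGroup.toGroup hrels with hφ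
  have hφof : ∀ u, φ (agen M u) = NP.rho M u := fun u => PresentedGroup.toGroup.of hrels
  have hQ : ∀ g ∈ standardParabolic M T, ∀ (x : α → ℝ), ∀ w ∉ T, (φ g) x w = x w := by
    intro g hg
    refine Subgroup.closure_induction ?_ ?_ ?_ ?_ hg
    · rintro _ ⟨u, huT, rfl⟩ x w hw
      rw [hφof u]
      have hwu : w ≠ u := fun h => hw (h ▸ huT)
      show NP.refl M u x w = x w
      simp [NP.refl, NP.sing_ne hwu]
    · intro x w hw
      simp
    · intro g h _ _ hg hh x w hw
      rw [map_mul, Equiv.Perm.mul_apply, hg _ _ hw, hh _ _ hw]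
    · intro g _ hg x w hw
      rw [map_inv]
      have := hg ((φ g)⁻¹ x) w hw
      rw [Equiv.Perm.coe_inv, Equiv.apply_symm_apply] at this
      exact this.symm
  -- the conjugated generator
  have hz : agen M t * agen M s * (agen M t)⁻¹ ∈ standardParabolic M T :=
    hnorm.conj_mem _ (Subgroup.subset_closure ⟨s, hsT, rfl⟩) (agen M t)
  set m := M s t with hm
  set c : ℝ := 2 * Real.cos (Real.pi / m) with hc
  have hKst : NP.K M s t = -c := by rw [NP.K_ne M hst_ne]; exact neg_mul 2 _
  have hKts : NP.K M t s = -c := by rw [NP.K_ne M hst_ne.symm, hsym t s]; exact neg_mul 2 _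
  set lam : ℝ := if m = 0 then 0 else c/2 with hlam
  set x : α → ℝ := NP.sing s + lam • NP.sing t with hx
  have heval := hQ _ hz x t htT
  have hφz : φ (agen M t * agen M s * (agen M t)⁻¹)
      = NP.rho M t * NP.rho M s * NP.rho M t := by
    rw [map_mul, map_mul, map_inv, hφof, hφof, inv_eq_of_mul_eq_one_right (NP.rho_sq M t)]
  rw [hφz] at heval
  rw [Equiv.Perm.mul_apply, Equiv.Perm.mul_apply] at heval
  have heval2 : NP.refl M t (NP.refl M s (NP.refl M t x)) t = x t := heval
  rw [hx, NP.conj_eval M hst_ne.symm hKst hKts lam] at heval2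
  have hxt : (NP.sing s + lam • NP.sing t) t = lam := by
    simp [NP.sing_self, NP.sing_ne hst_ne.symm]
  rw [hxt] at heval2
  -- so c^3 - c^2 lam - 2c = 0
  have hkey : c^3 - c^2*lam - 2*c = 0 := by linarith
  rcases hlab s t hst_ne with h0 | h2
  · -- m = 0, c = 2, lam = 0
    rw [← hm] at h0
    have hc2 : c = 2 := by
      rw [hc, h0]
      norm_num
    have hl0 : lam = 0 := by rw [hlam, if_pos h0]
    rw [hc2, hl0] at hkey
    norm_num at hkey
  · -- m ≥ 3
    rw [← hm] at h2
    have hm3 : 3 ≤ m := by omega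
    have hl : lam = c/2 := by rw [hlam, if_neg (by omega)]
    have hmpos : (0:ℝ) < m := by exact_mod_cast (by omega : 0 < m)
    have hθpos : 0 < Real.pi / m := div_pos Real.pi_pos hmpos
    have hθle : Real.pi / m ≤ Real.pi / 3 := by
      apply div_le_div_of_nonneg_left Real.pi_pos.le (by norm_num)
      exact_mod_cast hm3
    have hcpos : 0 < c := by
      rw [hc]
      have : 0 < Real.cos (Real.pi / m) := by
        apply Real.cos_pos_of_mem_Ioo
        constructor
        · linarith [Real.pi_pos]
        · linarith [Real.pi_pos]
      linarith
    have hclt : c < 2 := by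
      rw [hc]
      have hle : Real.cos (Real.pi / m) ≤ 1 := Real.cos_le_one _
      have hne1 : Real.cos (Real.pi / m) ≠ 1 := by
        intro h1
        rw [Real.cos_eq_one_iff_of_lt_of_lt (by linarith [Real.pi_pos])
          (by linarith [Real.pi_pos])] at h1
        linarith
      have : Real.cos (Real.pi / m) < 1 := lt_of_le_of_ne hle hne1
      linarith
    rw [hl] at hkey
    nlinarith


end ArtinPaper
end

section
/- Let A_Γ be an Artin group. A standard parabolic subgroup A_T is normal in A_Γ if and only if T is a union of irreducible components of Γ, i.e. T is a union of connected components of the auxiliary graph on S in which two vertices s ≠ t are adjacent exactly when they are NOT joined in Γ by an edge labelled 2. Equivalently, A_T is normal if and only if A_T is a product of direct factors of A_Γ. -/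
namespace ArtinPaper

/-- The auxiliary graph on `S` in which two distinct vertices are adjacent exactly when
they are NOT joined in `Γ` by an edge labelled `2`; its connected components are the
irreducible components of `Γ`. -/
def auxGraph {α : Type*} (M : α → α → ℕ) : SimpleGraph α where
  Adj s t := s ≠ t ∧ ¬(M s t = 2 ∧ M t s = 2)
  symm := ⟨fun s t h => ⟨h.1.symm, fun hc => h.2 ⟨hc.2, hc.1⟩⟩⟩
  loopless := ⟨fun s h => h.1 rfl⟩


end ArtinPaper

set_option linter.unusedSectionVars false
set_option maxHeartbeats 1000000

namespace ArtinPaper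

section BwWords
variable {G H : Type*} [Group G] [Group H]

/-- The alternating word `a b a b ⋯` (`m` letters) in an arbitrary group. -/
def bw (m : ℕ) (a b : G) : G :=
  ((List.range m).map (fun i => if i % 2 = 0 then a else b)).prod

lemma bw_succ (m : ℕ) (a b : G) : bw (m+1) a b = a * bw m b a := by
  unfold bw
  rw [List.range_succ_eq_map, List.map_cons, List.prod_cons, List.map_map]
  congr 1
  apply congrArg
  apply List.map_congr_left
  intro i _
  simp only [Function.comp_apply]
  rcases Nat.even_or_odd i with h | h
  · have h0 : i % 2 = 0 := Nat.even_iff.mp h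
    have h1 : (i+1) % 2 = 1 := by omega
    simp [h0, h1, Nat.succ_eq_add_one]
  · have h0 : i % 2 = 1 := Nat.odd_iff.mp h
    have h1 : (i+1) % 2 = 0 := by omega
    simp [h0, h1, Nat.succ_eq_add_one]

lemma map_bw (f : G →* H) (m : ℕ) (a b : G) : f (bw m a b) = bw m (f a) (f b) := by
  unfold bw
  rw [map_list_prod, List.map_map]
  congr 1
  apply List.map_congr_left
  intro i _
  simp [apply_ite f]

lemma mul_pow_mul_aux (a b : G) (m : ℕ) : (a*b)^(m+1) = a * (b*a)^m * b := by
  induction m with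
  | zero => simp
  | succ n ih =>
      rw [pow_succ (a*b) (n+1), ih, pow_succ (b*a) n]
      group

lemma bw_mul_inv_eq_pow (m : ℕ) : ∀ a b : G, a * a = 1 → b * b = 1 →
    bw m a b * (bw m b a)⁻¹ = (a*b)^m := by
  induction m with
  | zero => intro a b _ _; simp [bw]
  | succ n ih =>
      intro a b ha hb
      rw [bw_succ, bw_succ, mul_pow_mul_aux a b n, mul_inv_rev]
      have hbinv : b⁻¹ = b := by
        rw [inv_eq_iff_mul_eq_one, hb]
      rw [mul_assoc a (bw n b a), ← mul_assoc (bw n b a), ih b a hb ha, hbinv]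
      group

lemma bw_two (a b : G) : bw 2 a b = a * b := by
  have : List.range 2 = [0, 1] := rfl
  simp [bw, this]
end BwWords

section Geom
open Function Real
variable {α : Type*} [Fintype α] [DecidableEq α]
variable {α : Type*} [Fintype α] [DecidableEq α]

noncomputable def kmat (M : α → α → ℕ) (u v : α) : ℝ :=
  if u = v then 1 else if M u v = 0 then -1 else -Real.cos (Real.pi / (M u v))

lemma kmat_diag (M : α → α → ℕ) (u : α) : kmat M u u = 1 := by simp [kmat]

lemma kmat_symm (M : α → α → ℕ) (hsym : ∀ s t, M s t = M t s) (u v : α) :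
    kmat M u v = kmat M v u := by
  rcases eq_or_ne u v with rfl | h
  · rfl
  · unfold kmat
    rw [if_neg h, if_neg (Ne.symm h), hsym u v]

lemma kmat_edge (M : α → α → ℕ) {u v : α} (h : u ≠ v) (h2 : 2 ≤ M u v) :
    kmat M u v = -Real.cos (Real.pi / (M u v)) := by
  have h0 : M u v ≠ 0 := by omega
  unfold kmat
  rw [if_neg h, if_neg h0]

noncomputable def wB (M : α → α → ℕ) (x : α → ℝ) (u : α) : ℝ :=
  ∑ v, x v * kmat M v u

lemma wB_add (M : α → α → ℕ) (x y : α → ℝ) (u : α) :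
    wB M (x + y) u = wB M x u + wB M y u := by
  simp [wB, add_mul, Finset.sum_add_distrib]

lemma wB_smul (M : α → α → ℕ) (r : ℝ) (x : α → ℝ) (u : α) :
    wB M (r • x) u = r * wB M x u := by
  simp [wB, Finset.mul_sum, mul_assoc]

lemma wB_single (M : α → α → ℕ) (u v : α) : wB M (Pi.single u (1:ℝ)) v = kmat M u v := by
  simp only [wB, Pi.single_apply]
  rw [Finset.sum_eq_single u]
  · simp
  · intro b _ hb; simp [hb]
  · intro h; exact absurd (Finset.mem_univ u) h

noncomputable def sigmaFun (M : α → α → ℕ) (u : α) (x : α → ℝ) : α → ℝ :=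
  x + (-(2 * wB M x u)) • (Pi.single u 1 : α → ℝ)

lemma wB_sigmaFun (M : α → α → ℕ) (u v : α) (z : α → ℝ) :
    wB M (sigmaFun M u z) v = wB M z v - 2 * wB M z u * kmat M u v := by
  unfold sigmaFun
  rw [wB_add, wB_smul, wB_single]
  ring

lemma sigmaFun_involutive (M : α → α → ℕ) (u : α) : Involutive (sigmaFun M u) := by
  intro x
  have h : wB M (sigmaFun M u x) u = - wB M x u := by
    rw [wB_sigmaFun, kmat_diag]; ring
  show sigmaFun M u x + (-(2 * wB M (sigmaFun M u x) u)) • (Pi.single u 1 : α → ℝ) = x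
  rw [h]
  unfold sigmaFun
  ext v
  simp only [Pi.add_apply, Pi.smul_apply, smul_eq_mul]
  ring

noncomputable def sigmaPerm (M : α → α → ℕ) (u : α) : Equiv.Perm (α → ℝ) :=
  (sigmaFun_involutive M u).toPerm _

lemma sigmaPerm_apply (M : α → α → ℕ) (u : α) (x : α → ℝ) :
    sigmaPerm M u x = sigmaFun M u x := rfl

lemma sigmaPerm_sq (M : α → α → ℕ) (u : α) : sigmaPerm M u * sigmaPerm M u = 1 := by
  ext x
  simp [Equiv.Perm.mul_apply, sigmaPerm_apply, sigmaFun_involutive M u x]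

lemma braid_pow (M : α → α → ℕ) (hsym : ∀ s t, M s t = M t s)
    {s t : α} (hst : s ≠ t) (h2 : 2 ≤ M s t) :
    (sigmaPerm M s * sigmaPerm M t) ^ (M s t) = 1 := by
  set m := M s t with hm
  set θ : ℝ := Real.pi / m with hθ
  have hmR : (2:ℝ) ≤ (m:ℝ) := by exact_mod_cast h2
  have hθpos : 0 < θ := div_pos Real.pi_pos (by linarith)
  have hθlt : θ < Real.pi := by
    rw [hθ, div_lt_iff₀ (by linarith : (0:ℝ) < (m:ℝ))]
    nlinarith [Real.pi_pos]
  have hs0 : 0 < Real.sin θ := Real.sin_pos_of_pos_of_lt_pi hθpos hθlt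
  set c := Real.cos θ with hc
  set sθ := Real.sin θ with hsθ
  have hpy : sθ^2 + c^2 = 1 := Real.sin_sq_add_cos_sq θ
  have hκst : kmat M s t = -c := by rw [kmat_edge M hst h2]
  have hκts : kmat M t s = -c := by rw [kmat_symm M hsym]; exact hκst
  apply Equiv.ext
  intro x
  rw [Equiv.Perm.one_apply]
  set A := sigmaPerm M s * sigmaPerm M t with hA
  set p := wB M x s with hp0
  set q := wB M x t with hq0
  have main : ∀ j : ℕ, ∃ a b : ℝ,
      (A ^ j) x = x + a • (Pi.single s 1 : α → ℝ) + b • (Pi.single t 1 : α → ℝ) ∧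
      wB M ((A ^ j) x) s * sθ
        = -(Real.sin (2*(j:ℝ)*θ - θ)) * p - Real.sin (2*(j:ℝ)*θ) * q ∧
      wB M ((A ^ j) x) t * sθ
        = Real.sin (2*(j:ℝ)*θ) * p + Real.sin (2*(j:ℝ)*θ + θ) * q := by
    intro j
    induction j with
    | zero =>
      refine ⟨0, 0, by simp, ?_, ?_⟩
      · have e1 : 2*((0:ℕ):ℝ)*θ - θ = -θ := by push_cast; ring
        have e2 : 2*((0:ℕ):ℝ)*θ = 0 := by push_cast; ring
        rw [e1, e2, Real.sin_neg, Real.sin_zero, pow_zero, Equiv.Perm.one_apply]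
        ring
      · have e1 : 2*((0:ℕ):ℝ)*θ + θ = θ := by push_cast; ring
        have e2 : 2*((0:ℕ):ℝ)*θ = 0 := by push_cast; ring
        rw [e1, e2, Real.sin_zero, pow_zero, Equiv.Perm.one_apply]
        ring
    | succ j ih =>
      obtain ⟨a, b, hy, hps, hqs⟩ := ih
      set y := (A ^ j) x with hydef
      set P := wB M y s with hP0
      set Q := wB M y t with hQ0
      have hstep : (A ^ (j+1)) x = sigmaFun M s (sigmaFun M t y) := by
        rw [pow_succ']
        simp [Equiv.Perm.mul_apply, sigmaPerm_apply, hA]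
        rfl
      have hPz : wB M (sigmaFun M t y) s = P + 2*c*Q := by
        rw [wB_sigmaFun, hκts]; ring
      have hQz : wB M (sigmaFun M t y) t = -Q := by
        rw [wB_sigmaFun, kmat_diag]; ring
      have hP' : wB M ((A ^ (j+1)) x) s = -(P + 2*c*Q) := by
        rw [hstep, wB_sigmaFun, kmat_diag, hPz]; ring
      have hQ' : wB M ((A ^ (j+1)) x) t = -Q + 2*c*(P + 2*c*Q) := by
        rw [hstep, wB_sigmaFun, hκst, hPz, hQz]; ring
      refine ⟨a - 2*(P + 2*c*Q), b - 2*Q, ?_, ?_, ?_⟩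
      · have hinner : sigmaFun M t y = y + (-(2*Q)) • (Pi.single t 1 : α → ℝ) := rfl
        have houter : sigmaFun M s (sigmaFun M t y)
            = sigmaFun M t y + (-(2*(P + 2*c*Q))) • (Pi.single s 1 : α → ℝ) := by
          show sigmaFun M t y + (-(2 * wB M (sigmaFun M t y) s)) • (Pi.single s 1 : α → ℝ) = _
          rw [hPz]
        rw [hstep, houter, hinner, hy]
        ext v
        simp only [Pi.add_apply, Pi.smul_apply, smul_eq_mul]
        ring
      · rw [hP']
        push_cast
        have a1 : 2*((j:ℝ)+1)*θ - θ = 2*(j:ℝ)*θ + θ := by ring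
        have a2 : 2*((j:ℝ)+1)*θ = 2*(j:ℝ)*θ + θ + θ := by ring
        rw [a1, a2]
        have eSm : Real.sin (2*(j:ℝ)*θ - θ)
            = Real.sin (2*(j:ℝ)*θ) * c - Real.cos (2*(j:ℝ)*θ) * sθ := Real.sin_sub _ θ
        have eS1 : Real.sin (2*(j:ℝ)*θ + θ)
            = Real.sin (2*(j:ℝ)*θ) * c + Real.cos (2*(j:ℝ)*θ) * sθ := Real.sin_add _ θ
        have eC1 : Real.cos (2*(j:ℝ)*θ + θ)
            = Real.cos (2*(j:ℝ)*θ) * c - Real.sin (2*(j:ℝ)*θ) * sθ := Real.cos_add _ θ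
        have eS2 : Real.sin (2*(j:ℝ)*θ + θ + θ)
            = Real.sin (2*(j:ℝ)*θ + θ) * c + Real.cos (2*(j:ℝ)*θ + θ) * sθ := Real.sin_add _ θ
        rw [eSm] at hps
        rw [eS1] at hqs
        rw [eS2, eS1, eC1]
        linear_combination (-1) * hps - (2*c) * hqs - Real.sin (2*(j:ℝ)*θ) * q * hpy
      · rw [hQ']
        push_cast
        have a2 : 2*((j:ℝ)+1)*θ = 2*(j:ℝ)*θ + θ + θ := by ring
        rw [a2]
        have eSm : Real.sin (2*(j:ℝ)*θ - θ)
            = Real.sin (2*(j:ℝ)*θ) * c - Real.cos (2*(j:ℝ)*θ) * sθ := Real.sin_sub _ θ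
        have eS1 : Real.sin (2*(j:ℝ)*θ + θ)
            = Real.sin (2*(j:ℝ)*θ) * c + Real.cos (2*(j:ℝ)*θ) * sθ := Real.sin_add _ θ
        have eC1 : Real.cos (2*(j:ℝ)*θ + θ)
            = Real.cos (2*(j:ℝ)*θ) * c - Real.sin (2*(j:ℝ)*θ) * sθ := Real.cos_add _ θ
        have eS2 : Real.sin (2*(j:ℝ)*θ + θ + θ)
            = Real.sin (2*(j:ℝ)*θ + θ) * c + Real.cos (2*(j:ℝ)*θ + θ) * sθ := Real.sin_add _ θ
        have eC2 : Real.cos (2*(j:ℝ)*θ + θ + θ)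
            = Real.cos (2*(j:ℝ)*θ + θ) * c - Real.sin (2*(j:ℝ)*θ + θ) * sθ := Real.cos_add _ θ
        have eS3 : Real.sin (2*(j:ℝ)*θ + θ + θ + θ)
            = Real.sin (2*(j:ℝ)*θ + θ + θ) * c + Real.cos (2*(j:ℝ)*θ + θ + θ) * sθ :=
          Real.sin_add _ θ
        rw [eSm] at hps
        rw [eS1] at hqs
        rw [eS3, eS2, eC2, eS1, eC1]
        linear_combination (2*c) * hps + (4*c^2-1) * hqs
          + (3 * Real.sin (2*(j:ℝ)*θ) * c * q + Real.sin (2*(j:ℝ)*θ) * p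
             + Real.cos (2*(j:ℝ)*θ) * sθ * q) * hpy
  obtain ⟨a, b, hy, hps, hqs⟩ := main m
  have hm0 : (m:ℝ) ≠ 0 := by linarith
  have hang : 2*(m:ℝ)*θ = 2*Real.pi := by
    rw [hθ]; field_simp
  have b1 : 2*(m:ℝ)*θ - θ = 2*Real.pi - θ := by rw [hang]
  have b2 : 2*(m:ℝ)*θ + θ = 2*Real.pi + θ := by rw [hang]
  rw [b1, hang] at hps
  rw [b2, hang] at hqs
  have c1 : Real.sin (2*Real.pi - θ) = -sθ := by
    rw [Real.sin_sub, Real.sin_two_pi, Real.cos_two_pi]; ring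
  have c2 : Real.sin (2*Real.pi + θ) = sθ := by
    rw [Real.sin_add, Real.sin_two_pi, Real.cos_two_pi]; ring
  rw [c1, Real.sin_two_pi] at hps
  rw [c2, Real.sin_two_pi] at hqs
  -- hps : wB M ((A^m) x) s * sθ = -(-sθ) * p - 0 * q
  -- hqs : wB M ((A^m) x) t * sθ = 0 * p + sθ * q
  have hws : wB M ((A ^ m) x) s = p + a - c*b := by
    rw [hy, wB_add, wB_add, wB_smul, wB_smul, wB_single, wB_single, kmat_diag, hκts]
    ring
  have hwt : wB M ((A ^ m) x) t = q - c*a + b := by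
    rw [hy, wB_add, wB_add, wB_smul, wB_smul, wB_single, wB_single, kmat_diag, hκst]
    ring
  rw [hws] at hps
  rw [hwt] at hqs
  have ha1 : a - c*b = 0 := by
    have h' : (a - c*b) * sθ = 0 := by linear_combination hps
    rcases mul_eq_zero.mp h' with h | h
    · exact h
    · exact absurd h (ne_of_gt hs0)
  have hb1 : b - c*a = 0 := by
    have h' : (b - c*a) * sθ = 0 := by linear_combination hqs
    rcases mul_eq_zero.mp h' with h | h
    · exact h
    · exact absurd h (ne_of_gt hs0)
  have h1 : a = c*b := by linarith
  have h2 : b = c*a := by linarith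
  have hca : a = c^2 * a := by
    calc a = c*b := h1
    _ = c*(c*a) := by rw [h2]
    _ = c^2*a := by ring
  have hzero : a * (1 - c^2) = 0 := by linear_combination hca
  have hsq : (0:ℝ) < sθ^2 := by positivity
  have hc2 : 1 - c^2 > 0 := by linarith [hpy]
  have ha0 : a = 0 := by
    rcases mul_eq_zero.mp hzero with h | h
    · exact h
    · linarith
  have hb0 : b = 0 := by
    rw [ha0] at h2; simpa using h2
  rw [hy, ha0, hb0]
  simp

end Geom

section Glue
variable {α : Type*} [Fintype α] [DecidableEq α] (M : α → α → ℕ)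

lemma braidWord_eq_bw (m : ℕ) (s t : α) :
    braidWord m s t = bw m (FreeGroup.of s) (FreeGroup.of t) := rfl

lemma mk_rel {s t : α} (h2 : 2 ≤ M s t) :
    bw (M s t) (agen M s) (agen M t) = bw (M s t) (agen M t) (agen M s) := by
  have hr : braidWord (M s t) s t * (braidWord (M s t) t s)⁻¹ ∈ artinRels M :=
    ⟨s, t, h2, rfl⟩
  have h1 : PresentedGroup.mk (artinRels M)
      (braidWord (M s t) s t * (braidWord (M s t) t s)⁻¹) = 1 :=
    (QuotientGroup.eq_one_iff _).mpr (Subgroup.subset_normalClosure hr)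
  rw [map_mul, map_inv, mul_inv_eq_one] at h1
  rw [braidWord_eq_bw, braidWord_eq_bw, map_bw, map_bw] at h1
  exact h1

lemma agen_comm {s t : α} (h2 : M s t = 2) :
    agen M s * agen M t = agen M t * agen M s := by
  have := mk_rel M (s := s) (t := t) (by omega)
  rw [h2] at this
  rw [bw_two, bw_two] at this
  exact this

/-- The geometric representation of the Artin group. -/
noncomputable def geoRep (hsym : ∀ s t, M s t = M t s) (hdiag : ∀ s, M s s = 0) :
    ArtinGroup M →* Equiv.Perm (α → ℝ) :=
  PresentedGroup.toGroup (f := sigmaPerm M) (by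
    rintro r ⟨s, t, h2, rfl⟩
    have hst : s ≠ t := by
      intro h
      rw [h, hdiag t] at h2
      omega
    rw [map_mul, map_inv, braidWord_eq_bw, braidWord_eq_bw, map_bw, map_bw]
    simp only [FreeGroup.lift_apply_of]
    rw [bw_mul_inv_eq_pow _ _ _ (sigmaPerm_sq M s) (sigmaPerm_sq M t)]
    exact braid_pow M hsym hst h2)

lemma geoRep_agen (hsym : ∀ s t, M s t = M t s) (hdiag : ∀ s, M s s = 0) (u : α) :
    geoRep M hsym hdiag (agen M u) = sigmaPerm M u :=
  PresentedGroup.toGroup.of _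

/-- Permutations fixing all coordinates outside `T`. -/
def fixSub (T : Set α) : Subgroup (Equiv.Perm (α → ℝ)) where
  carrier := {f | ∀ x : α → ℝ, ∀ v, v ∉ T → f x v = x v}
  mul_mem' := by
    intro f g hf hg x v hv
    rw [Equiv.Perm.mul_apply, hf _ v hv, hg _ v hv]
  one_mem' := fun x v hv => rfl
  inv_mem' := by
    intro f hf x v hv
    have h := hf (f⁻¹ x) v hv
    rw [show f (f⁻¹ x) = x from Equiv.apply_symm_apply f x] at h
    exact h.symm

lemma sigmaFun_apply_eval (u : α) (z : α → ℝ) (v : α) :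
    sigmaFun M u z v = z v + (-(2 * wB M z u)) * ((Pi.single u 1 : α → ℝ) v) := by
  simp [sigmaFun]

lemma sigmaPerm_mem_fixSub {T : Set α} {u : α} (hu : u ∈ T) :
    sigmaPerm M u ∈ fixSub T := by
  intro x v hv
  have hvu : v ≠ u := fun h => hv (h ▸ hu)
  rw [sigmaPerm_apply, sigmaFun_apply_eval, Pi.single_eq_of_ne hvu]
  ring

/-- The key step: if the standard parabolic is normal, membership in `T` propagates
along edges of the auxiliary graph. -/
lemma adj_step (hsym : ∀ s t, M s t = M t s) (hdiag : ∀ s, M s s = 0)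
    {T : Set α} (hN : (standardParabolic M T).Normal)
    (hlab : ∀ s t, s ≠ t → M s t = 0 ∨ 2 ≤ M s t)
    {s t : α} (hs : s ∈ T) (hadj : (auxGraph M).Adj s t) : t ∈ T := by
  by_contra ht
  obtain ⟨hst, hn2⟩ := (show s ≠ t ∧ ¬(M s t = 2 ∧ M t s = 2) from hadj)
  -- the label is not 2
  have hM2 : M s t ≠ 2 := by
    intro h
    exact hn2 ⟨h, by rw [hsym t s]; exact h⟩
  -- hence kmat is nonzero
  have hκ : kmat M s t ≠ 0 := by
    rcases hlab s t hst with h0 | h2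
    · unfold kmat
      rw [if_neg hst, if_pos h0]
      norm_num
    · have h3 : 3 ≤ M s t := by omega
      rw [kmat_edge M hst h2]
      have hpos : 0 < Real.cos (Real.pi / (M s t)) := by
        apply Real.cos_pos_of_mem_Ioo
        constructor
        · have : 0 < Real.pi / (M s t) := by
            apply div_pos Real.pi_pos
            exact_mod_cast (by omega : 0 < M s t)
          linarith [Real.pi_pos]
        · have h3R : (3:ℝ) ≤ (M s t : ℝ) := by exact_mod_cast h3
          rw [div_lt_iff₀ (by linarith : (0:ℝ) < (M s t : ℝ))]
          nlinarith [Real.pi_pos]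
      intro h
      rw [neg_eq_zero] at h
      linarith
  set φ := geoRep M hsym hdiag with hφ
  have hgen : agen M s ∈ standardParabolic M T :=
    Subgroup.subset_closure ⟨s, hs, rfl⟩
  have hconj : agen M t * agen M s * (agen M t)⁻¹ ∈ standardParabolic M T :=
    hN.conj_mem _ hgen (agen M t)
  have hle : Subgroup.map φ (standardParabolic M T) ≤ fixSub T := by
    rw [standardParabolic, MonoidHom.map_closure]
    apply Subgroup.closure_le _ |>.mpr
    rintro _ ⟨_, ⟨u, hu, rfl⟩, rfl⟩
    rw [geoRep_agen M hsym hdiag]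
    exact sigmaPerm_mem_fixSub M hu
  have hmem : φ (agen M t * agen M s * (agen M t)⁻¹) ∈ fixSub T :=
    hle ⟨_, hconj, rfl⟩
  have heval := hmem (Pi.single t 1) t ht
  -- now compute the left side explicitly
  have hinv : (sigmaPerm M t)⁻¹ = sigmaPerm M t :=
    inv_eq_iff_mul_eq_one.mpr (sigmaPerm_sq M t)
  rw [map_mul, map_mul, map_inv, geoRep_agen M hsym hdiag, geoRep_agen M hsym hdiag, hinv] at heval
  rw [Equiv.Perm.mul_apply, Equiv.Perm.mul_apply] at heval
  have w0t : wB M (Pi.single t 1 : α → ℝ) t = 1 := by rw [wB_single, kmat_diag]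
  have w0s : wB M (Pi.single t 1 : α → ℝ) s = kmat M t s := by rw [wB_single]
  have w1t : wB M (sigmaFun M t (Pi.single t 1 : α → ℝ)) t = -1 := by
    rw [wB_sigmaFun, kmat_diag, w0t]; ring
  have w1s : wB M (sigmaFun M t (Pi.single t 1 : α → ℝ)) s = -(kmat M t s) := by
    rw [wB_sigmaFun, w0s, w0t, kmat_symm M hsym t s]; ring
  have w2t : wB M (sigmaFun M s (sigmaFun M t (Pi.single t 1 : α → ℝ))) t
      = -1 + 2 * (kmat M s t)^2 := by
    rw [wB_sigmaFun, w1t, w1s, kmat_symm M hsym t s]; ring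
  rw [sigmaPerm_apply, sigmaPerm_apply, sigmaPerm_apply] at heval
  rw [sigmaFun_apply_eval M t _ t, w2t] at heval
  rw [sigmaFun_apply_eval M s _ t, w1s] at heval
  rw [sigmaFun_apply_eval M t _ t, w0t] at heval
  simp only [Pi.single_eq_same, Pi.single_eq_of_ne (Ne.symm hst)] at heval
  have h0 : (kmat M s t)^2 = 0 := by nlinarith [heval]
  have h1 : kmat M s t = 0 := by
    have := sq_nonneg (kmat M s t)
    nlinarith [h0]
  exact hκ h1

end Glue

end ArtinPaper

namespace ArtinPaper

/-- A standard parabolic subgroup `A_T` is normal in `A_Γ` if and only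
if `T` is a union of irreducible components of `Γ`, i.e. `T` is closed under reachability
in the auxiliary graph. -/
theorem normal_standardParabolic_iff_union_of_components {α : Type*} [Fintype α]
    (M : α → α → ℕ)
    (hsym : ∀ s t, M s t = M t s) (hdiag : ∀ s, M s s = 0)
    (hlab : ∀ s t, s ≠ t → M s t = 0 ∨ 2 ≤ M s t)
    (T : Set α) :
    (standardParabolic M T).Normal ↔
      ∀ s ∈ T, ∀ t : α, (auxGraph M).Reachable s t → t ∈ T := by
  classical
  constructor
  · intro hN s hs t hreach
    have hwalk : ∀ u v : α, (auxGraph M).Walk u v → u ∈ T → v ∈ T := by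
      intro u v w
      induction w with
      | nil => exact id
      | cons h _ ih =>
          intro hu
          exact ih (adj_step M hsym hdiag hN hlab hu h)
    obtain ⟨w⟩ := hreach
    exact hwalk s t w hs
  · intro hcl
    rw [← Subgroup.normalizer_eq_top_iff]
    apply top_unique
    rw [← PresentedGroup.closure_range_of (artinRels M)]
    apply (Subgroup.closure_le _).mpr
    rintro _ ⟨u, rfl⟩
    by_cases hu : u ∈ T
    · exact Subgroup.le_normalizer (Subgroup.subset_closure ⟨u, hu, rfl⟩)
    · have hcomm : ∀ v ∈ T, Commute (agen M u) (agen M v) := by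
        intro v hv
        have hvu : v ≠ u := fun h => hu (h ▸ hv)
        have hnadj : ¬ (auxGraph M).Adj v u := fun ha => hu (hcl v hv u ha.reachable)
        have hb : M v u = 2 := by
          by_contra hb
          exact hnadj (show v ≠ u ∧ ¬(M v u = 2 ∧ M u v = 2) from ⟨hvu, fun hc => hb hc.1⟩)
        exact (agen_comm M hb).symm
      have hcent : ∀ h ∈ standardParabolic M T, Commute (agen M u) h := by
        intro h hh
        induction hh using Subgroup.closure_induction with
        | mem x hx =>
            obtain ⟨v, hv, rfl⟩ := hx
            exact hcomm v hv
        | one => exact Commute.one_right _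
        | mul x y hx hy cx cy => exact cx.mul_right cy
        | inv x hx cx => exact cx.inv_right
      rw [SetLike.mem_coe, Subgroup.mem_normalizer_iff]
      intro h
      constructor
      · intro hh
        have hfix : PresentedGroup.of u * h * (PresentedGroup.of u)⁻¹ = h := by
          have c := (hcent h hh).eq
          rw [show (PresentedGroup.of u : ArtinGroup M) * h = h * PresentedGroup.of u from c]
          group
        rw [hfix]
        exact hh
      · intro hh
        have c := hcent _ hh
        have e2 : (PresentedGroup.of u)⁻¹ *
            (PresentedGroup.of u * h * (PresentedGroup.of u)⁻¹) * PresentedGroup.of u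
            = PresentedGroup.of u * h * (PresentedGroup.of u)⁻¹ := by
          rw [show ((PresentedGroup.of u)⁻¹ : ArtinGroup M) *
              (PresentedGroup.of u * h * (PresentedGroup.of u)⁻¹)
              = (PresentedGroup.of u * h * (PresentedGroup.of u)⁻¹) *
                (PresentedGroup.of u)⁻¹ from c.inv_left.eq]
          group
        have e1 : h = (PresentedGroup.of u)⁻¹ *
            (PresentedGroup.of u * h * (PresentedGroup.of u)⁻¹) * PresentedGroup.of u := by
          group
        rw [e1, e2]
        exact hh

end ArtinPaper
end

section
/- Let A be the dihedral Artin group on two generators s, t with single relation Π(s,t;m) = Π(t,s;m), where 3 ≤ m < ∞. Then for every g ∈ A, either g⟨s⟩g⁻¹ = ⟨s⟩ or g⟨s⟩g⁻¹ ∩ ⟨s⟩ = {1}; moreover there exists g ∈ A with g⟨s⟩g⁻¹ ≠ ⟨s⟩. In particular the cyclic subgroup ⟨s⟩ is weakly malnormal in A. -/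
namespace ArtinPaper

/-- The labelled graph of the dihedral Artin group
`⟨s, t ∣ Π(s,t;m) = Π(t,s;m)⟩` on the two vertices `true` (= `s`) and `false` (= `t`). -/
def dihedralM (m : ℕ) : Bool → Bool → ℕ := fun s t => if s = t then 0 else m


open Monoid.CoprodI

section FreeProd

variable {G : Bool → Type} [∀ i, Group (G i)] [∀ i, DecidableEq (G i)]

theorem wprod_inj : Function.Injective (Word.prod (M := G)) := by
  intro u v h
  have hu : Word.equiv.symm u = Word.prod u := rfl
  have hv : Word.equiv.symm v = Word.prod v := rfl
  apply Word.equiv.symm.injective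
  rw [hu, hv, h]

theorem neword_toList_eq {i j k l : Bool} (U : NeWord G i j) (V : NeWord G k l)
    (h : U.prod = V.prod) : U.toList = V.toList := by
  have : U.toWord = V.toWord := wprod_inj h
  have := congrArg Word.toList this
  simpa [NeWord.toWord] using this

theorem neword_inv_length {i j : Bool} (U : NeWord G i j) :
    U.inv.toList.length = U.toList.length := by
  induction U with
  | singleton x h => rfl
  | append w₁ hne w₂ ih₁ ih₂ => simp [NeWord.inv, ih₁, ih₂, Nat.add_comm]

variable (x₁ : G true) (x₂ : G false)

/-- the basic two-letter block -/
def blockL : List (Σ i, G i) := [⟨true, x₁⟩, ⟨false, x₂⟩]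

/-- `n` copies of the block -/
def powL : ℕ → List (Σ i, G i)
  | 0 => []
  | n + 1 => blockL x₁ x₂ ++ powL n

theorem powL_add (a b : ℕ) : powL x₁ x₂ (a + b) = powL x₁ x₂ a ++ powL x₁ x₂ b := by
  induction a with
  | zero => simp [powL]
  | succ a ih =>
      have : a + 1 + b = (a + b) + 1 := by omega
      rw [this]
      simp only [powL, ih, List.append_assoc]

theorem powL_length (n : ℕ) : (powL x₁ x₂ n).length = 2 * n := by
  induction n with
  | zero => rfl
  | succ n ih => simp [powL, blockL, ih]; omega

theorem powL_getElem?_even {j n : ℕ} (h : j < n) :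
    (powL x₁ x₂ n)[2 * j]? = some ⟨true, x₁⟩ := by
  have hd : n = j + (n - j) := by omega
  rw [hd, powL_add]
  have h1 : (powL x₁ x₂ j).length = 2 * j := powL_length _ _ _
  rw [List.getElem?_append_right (by omega)]
  rw [h1]
  have h2 : n - j = (n - j - 1) + 1 := by omega
  rw [h2]
  simp [powL, blockL]

theorem comm_powL {n : ℕ} (hn : 0 < n) (L : List (Σ i, G i))
    (hcomm : L ++ powL x₁ x₂ n = powL x₁ x₂ n ++ L)
    (hlast : ∀ a ∈ L.getLast?, a.1 = false) :
    ∃ j, L = powL x₁ x₂ j := by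
  suffices H : ∀ N (L : List (Σ i, G i)), L.length ≤ N →
      L ++ powL x₁ x₂ n = powL x₁ x₂ n ++ L →
      (∀ a ∈ L.getLast?, a.1 = false) → ∃ j, L = powL x₁ x₂ j from
    H L.length L le_rfl hcomm hlast
  clear hcomm hlast L
  intro N
  induction N with
  | zero =>
      intro L hL _ _
      exact ⟨0, by simpa [powL] using List.length_eq_zero_iff.mp (Nat.le_zero.mp hL)⟩
  | succ N ih =>
      intro L hL hcomm hlast
      rcases eq_or_ne L [] with rfl | hne
      · exact ⟨0, rfl⟩
      have hplen : (powL x₁ x₂ n).length = 2 * n := powL_length _ _ _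
      rcases le_or_gt L.length (2 * n) with hle | hgt
      · -- L is a prefix of powL n
        have htake : L = (powL x₁ x₂ n).take L.length := by
          have t2 : (powL x₁ x₂ n ++ L).take L.length = (powL x₁ x₂ n).take L.length :=
            List.take_append_of_le_length (by omega)
          rw [← t2, ← hcomm, List.take_left]
        -- length of L is even
        rcases Nat.even_or_odd L.length with ⟨j, hj⟩ | ⟨j, hj⟩
        · refine ⟨j, ?_⟩
          have hsplit : n = j + (n - j) := by omega
          rw [htake, hj, hsplit, powL_add, List.take_left' (by rw [powL_length]; omega)]
        · exfalso
          have hjn : j < n := by omega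
          have hlast' : L.getLast? = (powL x₁ x₂ n)[2 * j]? := by
            rw [List.getLast?_eq_getElem?, htake, List.getElem?_take]
            have : L.length - 1 = 2 * j := by omega
            rw [List.length_take]
            rw [min_eq_left (by omega), this, if_pos (by omega)]
          rw [powL_getElem?_even _ _ hjn] at hlast'
          have := hlast _ (by rw [hlast']; rfl)
          simp at this
      · -- powL n is a prefix of L
        have h1 : L.take (2 * n) = powL x₁ x₂ n := by
          have t1 : (powL x₁ x₂ n ++ L).take (2 * n) = powL x₁ x₂ n :=
            List.take_left' hplen
          rw [← hcomm, List.take_append_of_le_length (by omega)] at t1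
          exact t1
        set L' := L.drop (2 * n) with hL'
        have hLeq : L = powL x₁ x₂ n ++ L' := by
          rw [← h1, hL', List.take_append_drop]
        have hL'len : L'.length = L.length - 2 * n := by
          rw [hL', List.length_drop]
        have hL'ne : L' ≠ [] := by
          intro h
          rw [h] at hL'len
          simp at hL'len
          omega
        have hcomm' : L' ++ powL x₁ x₂ n = powL x₁ x₂ n ++ L' := by
          apply List.append_cancel_left (as := powL x₁ x₂ n)
          rw [← List.append_assoc, ← hLeq, hcomm, hLeq]
        have hlast' : ∀ a ∈ L'.getLast?, a.1 = false := by
          intro a ha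
          apply hlast
          rw [hLeq, List.getLast?_append]
          rw [Option.mem_def] at ha ⊢
          rw [ha]
          rfl
        obtain ⟨j, hj⟩ := ih L' (by omega) hcomm' hlast'
        exact ⟨n + j, by rw [hLeq, hj, powL_add]⟩

variable (h₁ : x₁ ≠ 1) (h₂ : x₂ ≠ 1)

/-- A `NeWord` representing `(of x₁ * of x₂) ^ (n+1)`. -/
def wne : ℕ → NeWord G true false
  | 0 => NeWord.append (NeWord.singleton x₁ h₁) (by simp) (NeWord.singleton x₂ h₂)
  | n + 1 => NeWord.append (wne 0) (by simp) (wne n)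

theorem wne_prod (n : ℕ) : (wne x₁ x₂ h₁ h₂ n).prod = (of x₁ * of x₂) ^ (n + 1) := by
  induction n with
  | zero => simp [wne]
  | succ n ih => rw [pow_succ']; simp [wne, ih]

theorem wne_toList (n : ℕ) : (wne x₁ x₂ h₁ h₂ n).toList = powL x₁ x₂ (n + 1) := by
  induction n with
  | zero => simp [wne, powL, blockL]
  | succ n ih => simp [wne, powL, ih, blockL]

theorem powL_map_prod (j : ℕ) :
    ((powL x₁ x₂ j).map fun l => (of l.2 : Monoid.CoprodI G)).prod
      = (of x₁ * of x₂) ^ j := by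
  induction j with
  | zero => simp [powL]
  | succ j ih => rw [pow_succ']; simp [powL, blockL, ih, mul_assoc]

include h₁ h₂ in
theorem key_tf {n : ℕ} (U : NeWord G true false)
    (hc : U.prod * (of x₁ * of x₂) ^ (n + 1) = (of x₁ * of x₂) ^ (n + 1) * U.prod) :
    ∃ j : ℕ, U.prod = (of x₁ * of x₂) ^ j := by
  have e1 : (NeWord.append U (by simp) (wne x₁ x₂ h₁ h₂ n)).prod
      = U.prod * (of x₁ * of x₂) ^ (n + 1) := by simp [wne_prod]
  have e2 : (NeWord.append (wne x₁ x₂ h₁ h₂ n) (by simp) U).prod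
      = (of x₁ * of x₂) ^ (n + 1) * U.prod := by simp [wne_prod]
  have hlists := neword_toList_eq _ _ (e1.trans (hc.trans e2.symm))
  simp only [NeWord.toList, wne_toList] at hlists
  obtain ⟨j, hj⟩ := comm_powL x₁ x₂ (Nat.succ_pos n) U.toList hlists
    (by rw [U.toList_getLast?]; rintro a ⟨rfl⟩ <;> rfl)
  refine ⟨j, ?_⟩
  have : U.prod = ((U.toList.map fun l => (of l.2 : Monoid.CoprodI G))).prod := rfl
  rw [this, hj, powL_map_prod]

include h₁ h₂ in
theorem key_comm {n : ℕ} (g : Monoid.CoprodI G)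
    (hg : Commute g ((of x₁ * of x₂) ^ (n + 1))) :
    Commute g (of x₁ * of x₂) := by
  set w : Monoid.CoprodI G := of x₁ * of x₂ with hw
  set c : Monoid.CoprodI G := w ^ (n + 1) with hc
  rcases eq_or_ne g 1 with rfl | hne
  · exact Commute.one_left _
  -- get the normal word of g
  have hgw : Word.prod (Word.equiv (M := G) g) = g := (Word.equiv (M := G)).left_inv g
  have hWne : Word.equiv (M := G) g ≠ Word.empty := by
    intro h
    rw [h] at hgw
    exact hne (by simpa using hgw.symm)
  obtain ⟨i, j, U, hU⟩ := NeWord.of_word (Word.equiv (M := G) g) hWne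
  have hgU : U.prod = g := by rw [NeWord.prod, hU, hgw]
  have hcg : g * c = c * g := hg
  -- endpoint case analysis
  have lenc : (wne x₁ x₂ h₁ h₂ n).toList.length = 2 * (n + 1) := by
    rw [wne_toList, powL_length]
  cases i <;> cases j
  · -- false, false : contradiction via g = c⁻¹ * g * c
    exfalso
    have e : (NeWord.append (NeWord.append (wne x₁ x₂ h₁ h₂ n).inv (by simp) U)
        (by simp) (wne x₁ x₂ h₁ h₂ n)).prod = c⁻¹ * g * c := by
      simp [wne_prod, hgU, hc, hw]
    have heq : c⁻¹ * g * c = g := by rw [mul_assoc, hcg]; group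
    have := neword_toList_eq _ _ (e.trans (heq.trans hgU.symm))
    simp only [NeWord.toList] at this
    have hlen := congrArg List.length this
    simp only [List.length_append, neword_inv_length, lenc] at hlen
    omega
  · -- false, true : use inverse, reduce to key_tf
    have hci : U.inv.prod * c = c * U.inv.prod := by
      rw [NeWord.inv_prod, hgU]
      have := hg.inv_left
      exact this
    obtain ⟨j', hj'⟩ := key_tf x₁ x₂ h₁ h₂ U.inv hci
    rw [NeWord.inv_prod, hgU] at hj'
    have : g = (w ^ j')⁻¹ := by rw [← hj']; group
    rw [this]
    exact (Commute.pow_left (Commute.refl w) j').inv_left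
  · -- true, false : main case
    obtain ⟨j', hj'⟩ := key_tf x₁ x₂ h₁ h₂ U (by rw [hgU]; exact hcg)
    rw [hgU] at hj'
    rw [hj']
    exact Commute.pow_left (Commute.refl w) j'
  · -- true, true : contradiction via g = c * g * c⁻¹
    exfalso
    have e : (NeWord.append (NeWord.append (wne x₁ x₂ h₁ h₂ n) (by simp) U)
        (by simp) (wne x₁ x₂ h₁ h₂ n).inv).prod = c * g * c⁻¹ := by
      simp [wne_prod, hgU, hc, hw]
    have heq : c * g * c⁻¹ = g := by rw [← hcg]; group
    have := neword_toList_eq _ _ (e.trans (heq.trans hgU.symm))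
    simp only [NeWord.toList] at this
    have hlen := congrArg List.length this
    simp only [List.length_append, neword_inv_length, lenc] at hlen
    omega

/-- In the free product, `of x₂ * of x₁ * (of x₂)⁻¹ ≠ of x₁` for nontrivial letters. -/
theorem conj_ne_of (hx : x₁ ≠ 1) (hy : x₂ ≠ 1) :
    (of x₂ : Monoid.CoprodI G) * of x₁ * (of x₂)⁻¹ ≠ of x₁ := by
  intro h
  have e1 : (NeWord.append (NeWord.append (NeWord.singleton x₂ hy) (by simp)
      (NeWord.singleton x₁ hx)) (by simp)
      (NeWord.singleton x₂⁻¹ (inv_ne_one.mpr hy))).prod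
      = (of x₂ : Monoid.CoprodI G) * of x₁ * (of x₂)⁻¹ := by
    simp
  have e2 : (NeWord.singleton x₁ hx).prod = (of x₁ : Monoid.CoprodI G) := by simp
  have hl := neword_toList_eq _ _ (e1.trans (h.trans e2.symm))
  simp only [NeWord.toList] at hl
  exact absurd (congrArg List.length hl) (by simp)

end FreeProd

section AltProd

variable {H : Type*} [Monoid H] {K : Type*} [Monoid K]

/-- `stst⋯` (`m` letters) in a monoid. -/
def altProd (m : ℕ) (s t : H) : H :=
  ((List.range m).map (fun i => if i % 2 = 0 then s else t)).prod

@[simp] theorem altProd_zero (s t : H) : altProd 0 s t = 1 := rfl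

theorem altProd_succ (m : ℕ) (s t : H) :
    altProd (m + 1) s t = altProd m s t * (if m % 2 = 0 then s else t) := by
  rw [altProd, List.range_succ, List.map_append, List.prod_append]
  simp [altProd]

theorem altProd_succ' (m : ℕ) (s t : H) :
    altProd (m + 1) s t = s * altProd m t s := by
  induction m generalizing s t with
  | zero => simp [altProd, List.range_succ]
  | succ m ih =>
      rw [altProd_succ, ih, altProd_succ, mul_assoc]
      congr 1
      congr 1
      rcases Nat.mod_two_eq_zero_or_one m with h | h <;>
        simp [h, Nat.add_mod]

theorem altProd_even (k : ℕ) (s t : H) : altProd (2 * k) s t = (s * t) ^ k := by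
  induction k with
  | zero => simp
  | succ k ih =>
      have h2 : 2 * (k + 1) = (2 * k + 1) + 1 := by omega
      rw [h2, altProd_succ', altProd_succ', ih, pow_succ', mul_assoc]

theorem altProd_odd (k : ℕ) (s t : H) : altProd (2 * k + 1) s t = (s * t) ^ k * s := by
  rw [altProd_succ, altProd_even, if_pos (by omega)]

theorem altProd_same (m : ℕ) (s : H) : altProd m s s = s ^ m := by
  simp only [altProd, ite_self]
  rw [List.map_const', List.prod_replicate, List.length_range]

theorem altProd_map (F : H →* K) (m : ℕ) (s t : H) :
    F (altProd m s t) = altProd m (F s) (F t) := by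
  simp only [altProd, map_list_prod, List.map_map]
  congr 1
  apply List.map_congr_left
  intro i _
  simp only [Function.comp_apply, apply_ite F]

theorem braidWord_eq (m : ℕ) {α : Type*} (s t : α) :
    braidWord m s t = altProd m (FreeGroup.of s) (FreeGroup.of t) := rfl

end AltProd

section Dihedral

variable {m : ℕ}

/-- The images of the generators in the dihedral Artin group. -/
noncomputable abbrev sgen (m : ℕ) : ArtinGroup (dihedralM m) := agen (dihedralM m) true

noncomputable abbrev tgen (m : ℕ) : ArtinGroup (dihedralM m) := agen (dihedralM m) false

theorem artinRels_dihedral {r : FreeGroup Bool} (hm : 2 ≤ m)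
    (hr : r ∈ artinRels (dihedralM m)) :
    r = braidWord m true false * (braidWord m false true)⁻¹ ∨
    r = braidWord m false true * (braidWord m true false)⁻¹ := by
  obtain ⟨s, t, hst, hreq⟩ := hr
  cases s <;> cases t
  · simp [dihedralM] at hst
  · right; simpa [dihedralM] using hreq
  · left; simpa [dihedralM] using hreq
  · simp [dihedralM] at hst

theorem mk_rel_one {α : Type*} {rels : Set (FreeGroup α)} {r : FreeGroup α} (h : r ∈ rels) :
    PresentedGroup.mk rels r = 1 := by
  have : r ∈ Subgroup.normalClosure rels := Subgroup.subset_normalClosure h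
  exact (QuotientGroup.eq_one_iff r).mpr this

theorem mk_braidWord {α : Type*} {rels : Set (FreeGroup α)} (m : ℕ) (s t : α) :
    PresentedGroup.mk rels (braidWord m s t) =
      altProd m (PresentedGroup.of (rels := rels) s) (PresentedGroup.of (rels := rels) t) := by
  rw [braidWord_eq, altProd_map]
  rfl

/-- the braid relation holds in the dihedral Artin group -/
theorem braid_rel (hm : 2 ≤ m) :
    altProd m (sgen m) (tgen m) = altProd m (tgen m) (sgen m) := by
  have hmem : braidWord m true false * (braidWord m false true)⁻¹ ∈ artinRels (dihedralM m) :=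
    ⟨true, false, by simpa [dihedralM] using hm, by simp [dihedralM]⟩
  have h1 := mk_rel_one hmem
  rw [map_mul, map_inv, mk_braidWord, mk_braidWord] at h1
  have := mul_inv_eq_one.mp h1
  exact this

/-- The abelianization-style homomorphism to `Multiplicative ℤ`. -/
noncomputable def abm (m : ℕ) : ArtinGroup (dihedralM m) →* Multiplicative ℤ :=
  PresentedGroup.toGroup (f := fun _ => Multiplicative.ofAdd (1 : ℤ)) (by
    rintro r ⟨s, t, hst, rfl⟩
    rw [map_mul, map_inv]
    have hb : ∀ u v : Bool, (FreeGroup.lift fun _ => Multiplicative.ofAdd (1 : ℤ))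
        (braidWord (dihedralM m s t) u v) = Multiplicative.ofAdd (dihedralM m s t : ℤ) := by
      intro u v
      rw [braidWord_eq, altProd_map, FreeGroup.lift_apply_of, FreeGroup.lift_apply_of, altProd_same]
      rw [← ofAdd_nsmul]
      simp
    rw [hb, hb, mul_inv_cancel])

@[simp] theorem abm_sgen : abm m (sgen m) = Multiplicative.ofAdd (1 : ℤ) :=
  PresentedGroup.toGroup.of _

@[simp] theorem abm_tgen : abm m (tgen m) = Multiplicative.ofAdd (1 : ℤ) :=
  PresentedGroup.toGroup.of _

end Dihedral




section Master

theorem ofAdd_one_zpow (a : ℤ) :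
    (Multiplicative.ofAdd (1 : ℤ)) ^ a = Multiplicative.ofAdd a := by
  rw [← ofAdd_zsmul, smul_eq_mul, mul_one]

theorem mult_conj_eq (u v : Multiplicative ℤ) : u * v * u⁻¹ = v := by
  rw [mul_comm u v, mul_inv_cancel_right]

theorem master (m : ℕ) (hm : 3 ≤ m) (Q : Type*) [Group Q]
    (π : ArtinGroup (dihedralM m) →* Q)
    (hcent : ∀ (q : Q) (n : ℕ), Commute q ((π (sgen m)) ^ (n + 1)) → Commute q (π (sgen m)))
    (hNC : π (sgen m) * π (tgen m) ≠ π (tgen m) * π (sgen m))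
    (hker : ∀ h, π h = 1 → abm m h = 1 → h = 1) :
    (∀ g : ArtinGroup (dihedralM m),
        conjSub g (Subgroup.zpowers (agen (dihedralM m) true)) =
          Subgroup.zpowers (agen (dihedralM m) true) ∨
        conjSub g (Subgroup.zpowers (agen (dihedralM m) true)) ⊓
          Subgroup.zpowers (agen (dihedralM m) true) = ⊥) ∧
    (∃ g : ArtinGroup (dihedralM m),
        conjSub g (Subgroup.zpowers (agen (dihedralM m) true)) ≠
          Subgroup.zpowers (agen (dihedralM m) true)) ∧
    WeaklyMalnormal (Subgroup.zpowers (agen (dihedralM m) true)) := by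
  set σ : ArtinGroup (dihedralM m) := sgen m with hσ
  set τ : ArtinGroup (dihedralM m) := tgen m with hτ
  set Z : Subgroup (ArtinGroup (dihedralM m)) := Subgroup.zpowers σ with hZ
  -- step 1 : nontrivial intersection forces conjugation to fix σ
  have key1 : ∀ g : ArtinGroup (dihedralM m),
      conjSub g Z ⊓ Z ≠ ⊥ → g * σ * g⁻¹ = σ := by
    intro g hbot
    have hex : ∃ x ∈ conjSub g Z ⊓ Z, x ≠ 1 := by
      by_contra hcon
      push_neg at hcon
      exact hbot ((Subgroup.eq_bot_iff_forall _).mpr hcon)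
    obtain ⟨x, hx, hxne⟩ := hex
    obtain ⟨hx1, hx2⟩ := Subgroup.mem_inf.mp hx
    obtain ⟨y, hy, hyx⟩ := Subgroup.mem_map.mp hx1
    obtain ⟨a, ha⟩ := Subgroup.mem_zpowers_iff.mp hy
    obtain ⟨b, hb⟩ := Subgroup.mem_zpowers_iff.mp hx2
    have hyx' : g * σ ^ a * g⁻¹ = σ ^ b := by
      rw [ha, hb]
      simpa [MulAut.conj_apply] using hyx
    have hbne : b ≠ 0 := by
      rintro rfl
      rw [zpow_zero] at hb
      exact hxne hb.symm
    -- a = b via abelianization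
    have hab : a = b := by
      have e := congrArg (abm m) hyx'
      rw [map_mul, map_mul, map_zpow, map_zpow, map_inv, abm_sgen] at e
      rw [ofAdd_one_zpow, ofAdd_one_zpow, mult_conj_eq] at e
      exact Multiplicative.ofAdd.injective e
    subst hab
    -- push to Q
    have hcq : Commute (π g) ((π σ) ^ a) := by
      have e := congrArg π hyx'
      rw [map_mul, map_mul, map_zpow, map_inv] at e
      unfold Commute SemiconjBy
      calc π g * π σ ^ a = π g * π σ ^ a * (π g)⁻¹ * π g := by group
        _ = π σ ^ a * π g := by rw [e]
    obtain ⟨n, hn⟩ := Nat.exists_eq_succ_of_ne_zero (Int.natAbs_ne_zero.mpr hbne)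
    have hcq' : Commute (π g) ((π σ) ^ (n + 1)) := by
      rcases Int.natAbs_eq a with h' | h'
      · rw [h', hn, zpow_natCast] at hcq
        exact hcq
      · rw [h'] at hcq
        have h2 : (π σ) ^ (-(a.natAbs : ℤ)) = ((π σ) ^ (n + 1))⁻¹ := by
          rw [hn, zpow_neg, zpow_natCast]
        rw [h2] at hcq
        simpa using hcq.inv_right
    have hc := hcent (π g) n hcq'
    -- conclude g σ g⁻¹ = σ
    have hπ1 : π (g * σ * g⁻¹ * σ⁻¹) = 1 := by
      rw [map_mul, map_mul, map_mul, map_inv, map_inv, hc.eq]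
      group
    have hab1 : abm m (g * σ * g⁻¹ * σ⁻¹) = 1 := by
      rw [map_mul, map_mul, map_mul, map_inv, map_inv, mult_conj_eq]
      group
    have := hker _ hπ1 hab1
    rw [← mul_inv_eq_one]
    simpa [mul_assoc] using this
  have conj_eq : ∀ g : ArtinGroup (dihedralM m), g * σ * g⁻¹ = σ → conjSub g Z = Z := by
    intro g hgσ
    show Subgroup.map _ _ = _
    rw [MonoidHom.map_zpowers]
    have : (MulAut.conj g).toMonoidHom σ = σ := by
      simpa [MulAut.conj_apply] using hgσ
    rw [this]
  have part1 : ∀ g : ArtinGroup (dihedralM m), conjSub g Z = Z ∨ conjSub g Z ⊓ Z = ⊥ := by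
    intro g
    by_cases h0 : conjSub g Z ⊓ Z = ⊥
    · exact Or.inr h0
    · exact Or.inl (conj_eq g (key1 g h0))
  have part2 : conjSub τ Z ≠ Z := by
    intro heq
    have hmem : τ * σ * τ⁻¹ ∈ Z := by
      rw [← heq]
      refine Subgroup.mem_map.mpr ⟨σ, Subgroup.mem_zpowers σ, ?_⟩
      simp [MulAut.conj_apply]
    obtain ⟨e, he⟩ := Subgroup.mem_zpowers_iff.mp hmem
    have he1 : e = 1 := by
      have e2 := congrArg (abm m) he
      rw [map_zpow, abm_sgen, ofAdd_one_zpow, map_mul, map_mul, map_inv,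
        abm_sgen, abm_tgen, mult_conj_eq] at e2
      have := Multiplicative.ofAdd.injective e2
      omega
    rw [he1, zpow_one] at he
    have hcomm : σ * τ = τ * σ := by
      have := congrArg (· * τ) he
      simpa [mul_assoc] using this
    exact hNC (by rw [← map_mul, hcomm, map_mul])
  refine ⟨part1, ⟨τ, part2⟩, ⟨τ, ?_⟩⟩
  rcases part1 τ with h | h
  · exact absurd h part2
  · have hinf : Z ⊓ conjSub τ Z = ⊥ := by rw [inf_comm]; exact h
    rw [hinf]
    have : ((⊥ : Subgroup (ArtinGroup (dihedralM m))) : Set (ArtinGroup (dihedralM m)))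
        = {1} := Subgroup.coe_bot
    rw [this]
    exact Set.finite_singleton 1

end Master



section Helpers

/-- The hom `Multiplicative (ZMod p) →* H` sending the generator to `y` with `y ^ p = 1`. -/
noncomputable def cycHom {H : Type*} [Group H] (p : ℕ) (y : H) (hy : y ^ p = 1) :
    Multiplicative (ZMod p) →* H :=
  AddMonoidHom.toMultiplicativeLeft
    (ZMod.lift p ⟨MonoidHom.toAdditiveRight (zpowersHom H y), by
      have hz : y ^ ((p : ℤ)) = 1 := by rw [zpow_natCast, hy]
      simp [MonoidHom.coe_toAdditiveRight, zpowersHom_apply, hz]⟩)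

theorem cycHom_of {H : Type*} [Group H] (p : ℕ) (y : H) (hy : y ^ p = 1) :
    cycHom p y hy (Multiplicative.ofAdd (1 : ZMod p)) = y := by
  have h1 : (1 : ZMod p) = ((1 : ℤ) : ZMod p) := by norm_num
  rw [cycHom, AddMonoidHom.coe_toMultiplicativeLeft]
  show Additive.toMul
      ((ZMod.lift p ⟨MonoidHom.toAdditiveRight (zpowersHom H y), _⟩)
        (Multiplicative.toAdd (Multiplicative.ofAdd (1 : ZMod p)))) = y
  rw [toAdd_ofAdd, h1, ZMod.lift_coe]
  simp [MonoidHom.coe_toAdditiveRight, zpowersHom_apply]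

theorem zpowers_normal_of_central {A' : Type*} [Group A'] (z : A')
    (hz : ∀ g, Commute g z) : (Subgroup.zpowers z).Normal := by
  constructor
  intro n hn g
  obtain ⟨f, hf⟩ := Subgroup.mem_zpowers_iff.mp hn
  rw [← hf]
  have hc := (hz g).zpow_right f
  rw [hc.eq, mul_inv_cancel_right]
  exact Subgroup.mem_zpowers_iff.mpr ⟨f, rfl⟩

theorem central_of_gens {m : ℕ} (z : ArtinGroup (dihedralM m))
    (hs : Commute (sgen m) z) (ht : Commute (tgen m) z) :
    ∀ g : ArtinGroup (dihedralM m), Commute g z := by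
  intro g
  have hg := PresentedGroup.generated_by (artinRels (dihedralM m))
      (Subgroup.centralizer {z}) ?_ g
  · exact (Subgroup.mem_centralizer_iff.mp hg z rfl).symm
  · intro j
    apply Subgroup.mem_centralizer_iff.mpr
    intro h hh
    rw [Set.mem_singleton_iff] at hh
    subst hh
    cases j
    · exact ht.eq.symm
    · exact hs.eq.symm

theorem hker_gen {A' : Type*} [Group A'] {Q' : Type*} [Group Q']
    (ab : A' →* Multiplicative ℤ) (z : A') (N : Subgroup A') [N.Normal]
    (hNz : N = Subgroup.zpowers z) (d : ℤ) (hd : d ≠ 0)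
    (habz : ab z = Multiplicative.ofAdd d)
    (π : A' →* Q') (ρ : Q' →* A' ⧸ N) (hcomp : ρ.comp π = QuotientGroup.mk' N) :
    ∀ h, π h = 1 → ab h = 1 → h = 1 := by
  intro h hπ hab
  have h1 : QuotientGroup.mk' N h = 1 := by
    rw [← hcomp, MonoidHom.comp_apply, hπ, map_one]
  have h2 : h ∈ N := (QuotientGroup.eq_one_iff h).mp h1
  rw [hNz] at h2
  obtain ⟨f, hf⟩ := Subgroup.mem_zpowers_iff.mp h2
  rw [← hf] at hab ⊢
  rw [map_zpow, habz, ← ofAdd_zsmul, smul_eq_mul] at hab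
  have h3 : f * d = 0 := by
    have h5 := congrArg Multiplicative.toAdd hab
    rw [toAdd_ofAdd] at h5
    rw [h5]
    rfl
  have h4 : f = 0 := by
    rcases mul_eq_zero.mp h3 with h4 | h4 <;> omega
  rw [h4, zpow_zero]

theorem lift_braidWord {α : Type*} {K : Type*} [Group K] (f : α → K) (m : ℕ) (s t : α) :
    FreeGroup.lift f (braidWord m s t) = altProd m (f s) (f t) := by
  rw [braidWord_eq, altProd_map, FreeGroup.lift_apply_of, FreeGroup.lift_apply_of]

/-- The two-factor family for the free product target. -/
def GF (p q : ℕ) : Bool → Type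
  | true => Multiplicative (ZMod p)
  | false => Multiplicative (ZMod q)

instance (p q : ℕ) : ∀ b, Group (GF p q b)
  | true => inferInstanceAs (Group (Multiplicative (ZMod p)))
  | false => inferInstanceAs (Group (Multiplicative (ZMod q)))

instance (p q : ℕ) : ∀ b, DecidableEq (GF p q b)
  | true => inferInstanceAs (DecidableEq (Multiplicative (ZMod p)))
  | false => inferInstanceAs (DecidableEq (Multiplicative (ZMod q)))

end Helpers



section EvenCase

open Monoid.CoprodI in
/-- generator data for the even case -/
noncomputable def xE (k : ℕ) : GF k 0 true := Multiplicative.ofAdd (1 : ZMod k)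

noncomputable def yE (k : ℕ) : GF k 0 false := Multiplicative.ofAdd (-1 : ZMod 0)

theorem xE_ne (k : ℕ) (hk : 2 ≤ k) : xE k ≠ 1 := by
  intro h
  have h1 : (1 : ZMod k) = 0 := congrArg Multiplicative.toAdd h
  have h2 : ((1 : ℕ) : ZMod k) = 0 := by rw [Nat.cast_one]; exact h1
  have h3 := (ZMod.natCast_eq_zero_iff 1 k).mp h2
  have := Nat.le_of_dvd one_pos h3
  omega

theorem yE_ne (k : ℕ) : yE k ≠ 1 := by
  intro h
  have h1 : (-1 : ZMod 0) = 0 := congrArg Multiplicative.toAdd h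
  exact absurd h1 (by decide)

theorem xE_pow (k : ℕ) : xE k ^ k = 1 := by
  show Multiplicative.ofAdd (1 : ZMod k) ^ k = 1
  rw [← ofAdd_nsmul]
  simp [nsmul_eq_mul, ZMod.natCast_self]

theorem evenQrel (k : ℕ) :
    altProd (2 * k) (of (xE k) * of (yE k)) ((of (yE k))⁻¹)
      = altProd (2 * k) ((of (yE k))⁻¹) (of (xE k) * of (yE k)) := by
  rw [altProd_even, altProd_even]
  have e1 : (of (xE k) * of (yE k) : Monoid.CoprodI (GF k 0)) * (of (yE k))⁻¹
      = of (xE k) := mul_inv_cancel_right _ _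
  have e2 : ((of (yE k))⁻¹ : Monoid.CoprodI (GF k 0)) * (of (xE k) * of (yE k))
      = (of (yE k))⁻¹ * of (xE k) * ((of (yE k))⁻¹)⁻¹ := by
    rw [inv_inv, mul_assoc]
  have e3 : (of (xE k) : Monoid.CoprodI (GF k 0)) ^ k = 1 := by
    rw [← map_pow, xE_pow, map_one]
  rw [e1, e2, conj_pow, e3]
  simp

theorem even_rels (k : ℕ) (hk : 1 ≤ k) : ∀ r ∈ artinRels (dihedralM (2 * k)),
    FreeGroup.lift (fun b => bif b then (of (xE k) * of (yE k) : Monoid.CoprodI (GF k 0))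
      else (of (yE k))⁻¹) r = 1 := by
  intro r hr
  rcases artinRels_dihedral (show 2 ≤ 2 * k by omega) hr with rfl | rfl
  · rw [map_mul, map_inv, lift_braidWord, lift_braidWord]
    simp only [Bool.cond_true, Bool.cond_false]
    exact mul_inv_eq_one.mpr (evenQrel k)
  · rw [map_mul, map_inv, lift_braidWord, lift_braidWord]
    simp only [Bool.cond_true, Bool.cond_false]
    exact mul_inv_eq_one.mpr (evenQrel k).symm

noncomputable def piE (k : ℕ) (hk : 1 ≤ k) :
    ArtinGroup (dihedralM (2 * k)) →* Monoid.CoprodI (GF k 0) :=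
  PresentedGroup.toGroup (even_rels k hk)

theorem piE_s (k : ℕ) (hk : 1 ≤ k) :
    piE k hk (sgen (2 * k)) = of (xE k) * of (yE k) :=
  PresentedGroup.toGroup.of _

theorem piE_t (k : ℕ) (hk : 1 ≤ k) :
    piE k hk (tgen (2 * k)) = (of (yE k))⁻¹ :=
  PresentedGroup.toGroup.of _

theorem even_hrel (k : ℕ) (hk : 1 ≤ k) :
    (sgen (2 * k) * tgen (2 * k)) ^ k = (tgen (2 * k) * sgen (2 * k)) ^ k := by
  have h := braid_rel (m := 2 * k) (by omega)
  rwa [altProd_even, altProd_even] at h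

theorem even_central (k : ℕ) (hk : 1 ≤ k) :
    ∀ g, Commute g ((sgen (2 * k) * tgen (2 * k)) ^ k) := by
  have semi1 : SemiconjBy (sgen (2 * k)) (tgen (2 * k) * sgen (2 * k))
      (sgen (2 * k) * tgen (2 * k)) := (mul_assoc _ _ _).symm
  have semi2 : SemiconjBy (tgen (2 * k)) (sgen (2 * k) * tgen (2 * k))
      (tgen (2 * k) * sgen (2 * k)) := (mul_assoc _ _ _).symm
  apply central_of_gens
  · show sgen (2 * k) * (sgen (2 * k) * tgen (2 * k)) ^ k
      = (sgen (2 * k) * tgen (2 * k)) ^ k * sgen (2 * k)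
    calc sgen (2 * k) * (sgen (2 * k) * tgen (2 * k)) ^ k
        = sgen (2 * k) * (tgen (2 * k) * sgen (2 * k)) ^ k := by rw [← even_hrel k hk]
      _ = (sgen (2 * k) * tgen (2 * k)) ^ k * sgen (2 * k) := semi1.pow_right k
  · show tgen (2 * k) * (sgen (2 * k) * tgen (2 * k)) ^ k
      = (sgen (2 * k) * tgen (2 * k)) ^ k * tgen (2 * k)
    calc tgen (2 * k) * (sgen (2 * k) * tgen (2 * k)) ^ k
        = (tgen (2 * k) * sgen (2 * k)) ^ k * tgen (2 * k) := semi2.pow_right k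
      _ = (sgen (2 * k) * tgen (2 * k)) ^ k * tgen (2 * k) := by rw [← even_hrel k hk]

theorem even_abz (k : ℕ) :
    abm (2 * k) ((sgen (2 * k) * tgen (2 * k)) ^ k) = Multiplicative.ofAdd (2 * k : ℤ) := by
  rw [map_pow, map_mul, abm_sgen, abm_tgen, ← ofAdd_add, ← ofAdd_nsmul]
  congr 1
  simp [nsmul_eq_mul]
  ring

theorem even_hker (k : ℕ) (hk : 1 ≤ k) :
    ∀ h, piE k hk h = 1 → abm (2 * k) h = 1 → h = 1 := by
  haveI hN : (Subgroup.zpowers ((sgen (2 * k) * tgen (2 * k)) ^ k)).Normal :=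
    zpowers_normal_of_central _ (even_central k hk)
  set N := Subgroup.zpowers ((sgen (2 * k) * tgen (2 * k)) ^ k) with hNdef
  have hβk : ((QuotientGroup.mk' N) (sgen (2 * k) * tgen (2 * k))) ^ k = 1 := by
    rw [← map_pow]
    exact (QuotientGroup.eq_one_iff _).mpr (Subgroup.mem_zpowers _)
  refine hker_gen (abm (2 * k)) ((sgen (2 * k) * tgen (2 * k)) ^ k) N hNdef
    (2 * k : ℤ) (by omega) (even_abz k) (piE k hk)
    (Monoid.CoprodI.lift (fun b => Bool.rec
      (motive := fun b => GF k 0 b →* _)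
      (cycHom 0 (QuotientGroup.mk' N (tgen (2 * k))) (pow_zero _))
      (cycHom k (QuotientGroup.mk' N (sgen (2 * k) * tgen (2 * k))) hβk) b)) ?_
  apply PresentedGroup.ext
  intro b
  have hfx : Monoid.CoprodI.lift (fun b => Bool.rec
      (motive := fun b => GF k 0 b →* _)
      (cycHom 0 (QuotientGroup.mk' N (tgen (2 * k))) (pow_zero _))
      (cycHom k (QuotientGroup.mk' N (sgen (2 * k) * tgen (2 * k))) hβk) b) (of (xE k))
      = QuotientGroup.mk' N (sgen (2 * k) * tgen (2 * k)) := by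
    rw [Monoid.CoprodI.lift_of]
    exact cycHom_of k _ hβk
  have hfy : Monoid.CoprodI.lift (fun b => Bool.rec
      (motive := fun b => GF k 0 b →* _)
      (cycHom 0 (QuotientGroup.mk' N (tgen (2 * k))) (pow_zero _))
      (cycHom k (QuotientGroup.mk' N (sgen (2 * k) * tgen (2 * k))) hβk) b) (of (yE k))
      = (QuotientGroup.mk' N (tgen (2 * k)))⁻¹ := by
    have hy : yE k = (Multiplicative.ofAdd (1 : ZMod 0))⁻¹ := rfl
    rw [Monoid.CoprodI.lift_of]
    show cycHom 0 (QuotientGroup.mk' N (tgen (2 * k))) (pow_zero _)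
      (Multiplicative.ofAdd (-1 : ZMod 0)) = _
    have hc0 := cycHom_of 0 (QuotientGroup.mk' N (tgen (2 * k))) (pow_zero _)
    conv_rhs => rw [← hc0]
    rw [← map_inv]
    rfl
  cases b
  · rw [MonoidHom.comp_apply]
    show (Monoid.CoprodI.lift _) (piE k hk (tgen (2 * k))) = QuotientGroup.mk' N (tgen (2 * k))
    rw [piE_t, map_inv, hfy, inv_inv]
  · rw [MonoidHom.comp_apply]
    show (Monoid.CoprodI.lift _) (piE k hk (sgen (2 * k)))
      = QuotientGroup.mk' N (sgen (2 * k))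
    rw [piE_s, map_mul, hfx, hfy, ← map_inv, ← map_mul, mul_inv_cancel_right]

theorem even_main (k : ℕ) (hk : 2 ≤ k) :
    (∀ g : ArtinGroup (dihedralM (2 * k)),
        conjSub g (Subgroup.zpowers (agen (dihedralM (2 * k)) true)) =
          Subgroup.zpowers (agen (dihedralM (2 * k)) true) ∨
        conjSub g (Subgroup.zpowers (agen (dihedralM (2 * k)) true)) ⊓
          Subgroup.zpowers (agen (dihedralM (2 * k)) true) = ⊥) ∧
    (∃ g : ArtinGroup (dihedralM (2 * k)),
        conjSub g (Subgroup.zpowers (agen (dihedralM (2 * k)) true)) ≠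
          Subgroup.zpowers (agen (dihedralM (2 * k)) true)) ∧
    WeaklyMalnormal (Subgroup.zpowers (agen (dihedralM (2 * k)) true)) := by
  have hk1 : 1 ≤ k := by omega
  apply master (2 * k) (by omega) _ (piE k hk1)
  · -- centralizer condition
    intro q n hq
    rw [piE_s] at hq ⊢
    exact key_comm (xE k) (yE k) (xE_ne k hk) (yE_ne k) q hq
  · -- noncommuting
    rw [piE_s, piE_t]
    intro hEq
    apply conj_ne_of (xE k) (yE k)⁻¹ (xE_ne k hk) (inv_ne_one.mpr (yE_ne k))
    rw [map_inv, inv_inv]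
    rw [mul_inv_cancel_right] at hEq
    rw [mul_assoc]
    exact hEq.symm
  · exact even_hker k hk1

end EvenCase



section OddCase

noncomputable def bO (m : ℕ) : GF m 2 true := Multiplicative.ofAdd (1 : ZMod m)

noncomputable def xO (m k : ℕ) : GF m 2 true := (bO m ^ k)⁻¹

noncomputable def yO (m : ℕ) : GF m 2 false := Multiplicative.ofAdd (1 : ZMod 2)

theorem yO_ne (m : ℕ) : yO m ≠ 1 := by
  intro h
  have h1 : (1 : ZMod 2) = 0 := congrArg Multiplicative.toAdd h
  exact absurd h1 (by decide)

theorem yO_inv (m : ℕ) : (yO m)⁻¹ = yO m := by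
  show (Multiplicative.ofAdd (1 : ZMod 2))⁻¹ = Multiplicative.ofAdd (1 : ZMod 2)
  rw [← ofAdd_neg]
  norm_num
  decide

theorem yO_sq (m : ℕ) : yO m * yO m = 1 := by
  show Multiplicative.ofAdd (1 : ZMod 2) * Multiplicative.ofAdd (1 : ZMod 2) = 1
  rw [← ofAdd_add]
  have : (1 + 1 : ZMod 2) = 0 := by decide
  rw [this]
  rfl

theorem bO_pow_cast (m k : ℕ) : bO m ^ k = Multiplicative.ofAdd ((k : ℕ) : ZMod m) := by
  show Multiplicative.ofAdd (1 : ZMod m) ^ k = _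
  rw [← ofAdd_nsmul]
  congr 1
  rw [nsmul_eq_mul, mul_one]

theorem bO_ne (m : ℕ) (hm : 2 ≤ m) : bO m ≠ 1 := by
  intro h
  have h1 : (1 : ZMod m) = 0 := congrArg Multiplicative.toAdd h
  have h2 : ((1 : ℕ) : ZMod m) = 0 := by rw [Nat.cast_one]; exact h1
  have h3 := (ZMod.natCast_eq_zero_iff 1 m).mp h2
  have := Nat.le_of_dvd one_pos h3
  omega

theorem xO_ne (m k : ℕ) (hk : 1 ≤ k) (hkm : k < m) : xO m k ≠ 1 := by
  intro h
  have h0 : bO m ^ k = 1 := by rwa [xO, inv_eq_one] at h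
  rw [bO_pow_cast] at h0
  have h1 : ((k : ℕ) : ZMod m) = 0 := congrArg Multiplicative.toAdd h0
  have h2 := (ZMod.natCast_eq_zero_iff k m).mp h1
  have := Nat.le_of_dvd (by omega) h2
  omega

theorem bO_pow_m (m : ℕ) : bO m ^ m = 1 := by
  rw [bO_pow_cast, ZMod.natCast_self]
  rfl

noncomputable def SO (m k : ℕ) : Monoid.CoprodI (GF m 2) := of (xO m k) * of (yO m)

noncomputable def TO (m k : ℕ) : Monoid.CoprodI (GF m 2) :=
  of (yO m) * (of (bO m)) ^ (k + 1)

theorem of_xO (m k : ℕ) :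
    (of (xO m k) : Monoid.CoprodI (GF m 2)) = ((of (bO m)) ^ k)⁻¹ := by
  rw [xO, map_inv, map_pow]

theorem of_yO_inv (m : ℕ) :
    ((of (yO m) : Monoid.CoprodI (GF m 2)))⁻¹ = of (yO m) := by
  rw [← map_inv, yO_inv]

theorem of_yO_sq (m : ℕ) :
    (of (yO m) : Monoid.CoprodI (GF m 2)) * of (yO m) = 1 := by
  rw [← map_mul, yO_sq, map_one]

theorem odd_ST (m k : ℕ) : SO m k * TO m k = of (bO m) := by
  rw [SO, TO]
  have h1 : (of (xO m k) * of (yO m) : Monoid.CoprodI (GF m 2))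
      * (of (yO m) * (of (bO m)) ^ (k + 1))
      = of (xO m k) * (of (yO m) * of (yO m)) * (of (bO m)) ^ (k + 1) := by
    group
  rw [h1, of_yO_sq, mul_one, of_xO, pow_succ, inv_mul_cancel_left]

theorem odd_TS (m k : ℕ) :
    TO m k * SO m k = of (yO m) * of (bO m) * of (yO m) := by
  rw [SO, TO]
  have h1 : (of (yO m) * (of (bO m)) ^ (k + 1) : Monoid.CoprodI (GF m 2))
      * (of (xO m k) * of (yO m))
      = of (yO m) * ((of (bO m)) ^ (k + 1) * of (xO m k)) * of (yO m) := by
    group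
  rw [h1, of_xO, pow_succ', mul_inv_cancel_right]

theorem oddQrel (m k : ℕ) (hmk : m = 2 * k + 1) :
    altProd m (SO m k) (TO m k) = altProd m (TO m k) (SO m k) := by
  have hB : (of (bO m) : Monoid.CoprodI (GF m 2)) ^ m = 1 := by
    rw [← map_pow, bO_pow_m, map_one]
  have key1 : altProd m (SO m k) (TO m k) = of (yO m) := by
    rw [hmk, altProd_odd, odd_ST, SO, of_xO]
    group
  have key2 : altProd m (TO m k) (SO m k) = of (yO m) := by
    rw [hmk, altProd_odd, odd_TS]
    have hc : (of (yO (2 * k + 1)) * of (bO (2 * k + 1)) * of (yO (2 * k + 1))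
        : Monoid.CoprodI (GF (2 * k + 1) 2))
        = of (yO (2 * k + 1)) * of (bO (2 * k + 1)) * (of (yO (2 * k + 1)))⁻¹ := by
      rw [of_yO_inv]
    rw [hc, conj_pow, TO]
    have h2 : of (yO (2 * k + 1)) * (of (bO (2 * k + 1))) ^ k * (of (yO (2 * k + 1)))⁻¹
        * (of (yO (2 * k + 1)) * (of (bO (2 * k + 1))) ^ (k + 1))
        = of (yO (2 * k + 1))
          * ((of (bO (2 * k + 1))) ^ k * (of (bO (2 * k + 1))) ^ (k + 1)) := by
      group
    rw [h2, ← pow_add]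
    have h3 : k + (k + 1) = 2 * k + 1 := by omega
    rw [h3]
    rw [hmk] at hB
    rw [hB, mul_one]
  rw [key1, key2]


theorem odd_rels (m k : ℕ) (hmk : m = 2 * k + 1) (hk : 1 ≤ k) : ∀ r ∈ artinRels (dihedralM m),
    FreeGroup.lift (fun b => bif b then SO m k else TO m k) r = 1 := by
  intro r hr
  rcases artinRels_dihedral (show 2 ≤ m by omega) hr with rfl | rfl
  · rw [map_mul, map_inv, lift_braidWord, lift_braidWord]
    simp only [Bool.cond_true, Bool.cond_false]
    exact mul_inv_eq_one.mpr (oddQrel m k hmk)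
  · rw [map_mul, map_inv, lift_braidWord, lift_braidWord]
    simp only [Bool.cond_true, Bool.cond_false]
    exact mul_inv_eq_one.mpr (oddQrel m k hmk).symm

noncomputable def piO (m k : ℕ) (hmk : m = 2 * k + 1) (hk : 1 ≤ k) :
    ArtinGroup (dihedralM m) →* Monoid.CoprodI (GF m 2) :=
  PresentedGroup.toGroup (odd_rels m k hmk hk)

theorem piO_s (m k : ℕ) (hmk : m = 2 * k + 1) (hk : 1 ≤ k) : piO m k hmk hk (sgen m) = SO m k :=
  PresentedGroup.toGroup.of _

theorem piO_t (m k : ℕ) (hmk : m = 2 * k + 1) (hk : 1 ≤ k) : piO m k hmk hk (tgen m) = TO m k :=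
  PresentedGroup.toGroup.of _

theorem comm_of_swap {Gr : Type*} [Group Gr] {a b D : Gr}
    (h1 : a * D = D * b) (h2 : b * D = D * a) : a * (D * D) = (D * D) * a := by
  calc a * (D * D) = (a * D) * D := (mul_assoc _ _ _).symm
    _ = (D * b) * D := by rw [h1]
    _ = D * (b * D) := mul_assoc _ _ _
    _ = D * (D * a) := by rw [h2]
    _ = (D * D) * a := (mul_assoc _ _ _).symm

/- the half-twist `Δ` -/
theorem odd_hrel (m k : ℕ) (hmk : m = 2 * k + 1) (hk : 1 ≤ k) :
    (sgen m * tgen m) ^ k * sgen m = (tgen m * sgen m) ^ k * tgen m := by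
  subst hmk
  have hm2 : 2 ≤ 2 * k + 1 := by omega
  have h := braid_rel (m := 2 * k + 1) hm2
  rwa [altProd_odd, altProd_odd] at h

theorem odd_sD (m k : ℕ) (hmk : m = 2 * k + 1) (hk : 1 ≤ k) :
    sgen m * ((sgen m * tgen m) ^ k * sgen m)
      = ((sgen m * tgen m) ^ k * sgen m) * tgen m := by
  subst hmk
  have semi1 : SemiconjBy (sgen (2 * k + 1)) (tgen (2 * k + 1) * sgen (2 * k + 1))
      (sgen (2 * k + 1) * tgen (2 * k + 1)) := (mul_assoc _ _ _).symm
  calc sgen (2 * k + 1) * ((sgen (2 * k + 1) * tgen (2 * k + 1)) ^ k * sgen (2 * k + 1))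
      = sgen (2 * k + 1) * ((tgen (2 * k + 1) * sgen (2 * k + 1)) ^ k * tgen (2 * k + 1)) := by
        rw [odd_hrel (2 * k + 1) k rfl hk]
    _ = (sgen (2 * k + 1) * (tgen (2 * k + 1) * sgen (2 * k + 1)) ^ k) * tgen (2 * k + 1) := by
        rw [mul_assoc]
    _ = ((sgen (2 * k + 1) * tgen (2 * k + 1)) ^ k * sgen (2 * k + 1)) * tgen (2 * k + 1) := by
        rw [(semi1.pow_right k).eq]

theorem odd_tD (m k : ℕ) (hmk : m = 2 * k + 1) (hk : 1 ≤ k) :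
    tgen m * ((sgen m * tgen m) ^ k * sgen m)
      = ((sgen m * tgen m) ^ k * sgen m) * sgen m := by
  subst hmk
  have semi2 : SemiconjBy (tgen (2 * k + 1)) (sgen (2 * k + 1) * tgen (2 * k + 1))
      (tgen (2 * k + 1) * sgen (2 * k + 1)) := (mul_assoc _ _ _).symm
  calc tgen (2 * k + 1) * ((sgen (2 * k + 1) * tgen (2 * k + 1)) ^ k * sgen (2 * k + 1))
      = (tgen (2 * k + 1) * (sgen (2 * k + 1) * tgen (2 * k + 1)) ^ k) * sgen (2 * k + 1) := by
        rw [mul_assoc]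
    _ = ((tgen (2 * k + 1) * sgen (2 * k + 1)) ^ k * tgen (2 * k + 1)) * sgen (2 * k + 1) := by
        rw [(semi2.pow_right k).eq]
    _ = ((sgen (2 * k + 1) * tgen (2 * k + 1)) ^ k * sgen (2 * k + 1)) * sgen (2 * k + 1) := by
        rw [← odd_hrel (2 * k + 1) k rfl hk]

theorem odd_central (m k : ℕ) (hmk : m = 2 * k + 1) (hk : 1 ≤ k) :
    ∀ g, Commute g (((sgen m * tgen m) ^ k * sgen m)
      * ((sgen m * tgen m) ^ k * sgen m)) := by
  apply central_of_gens
  · exact comm_of_swap (odd_sD m k hmk hk) (odd_tD m k hmk hk)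
  · exact comm_of_swap (odd_tD m k hmk hk) (odd_sD m k hmk hk)

theorem odd_z_eq (m k : ℕ) (hmk : m = 2 * k + 1) (hk : 1 ≤ k) :
    (sgen m * tgen m) ^ m
      = ((sgen m * tgen m) ^ k * sgen m) * ((sgen m * tgen m) ^ k * sgen m) := by
  subst hmk
  have semiD1 : SemiconjBy ((sgen (2 * k + 1) * tgen (2 * k + 1)) ^ k * sgen (2 * k + 1))
      (tgen (2 * k + 1)) (sgen (2 * k + 1)) := (odd_sD (2 * k + 1) k rfl hk).symm
  have semiD2 : SemiconjBy ((sgen (2 * k + 1) * tgen (2 * k + 1)) ^ k * sgen (2 * k + 1))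
      (sgen (2 * k + 1)) (tgen (2 * k + 1)) := (odd_tD (2 * k + 1) k rfl hk).symm
  have semiD : SemiconjBy ((sgen (2 * k + 1) * tgen (2 * k + 1)) ^ k * sgen (2 * k + 1))
      (tgen (2 * k + 1) * sgen (2 * k + 1)) (sgen (2 * k + 1) * tgen (2 * k + 1)) :=
    semiD1.mul_right semiD2
  symm
  calc ((sgen (2 * k + 1) * tgen (2 * k + 1)) ^ k * sgen (2 * k + 1))
        * ((sgen (2 * k + 1) * tgen (2 * k + 1)) ^ k * sgen (2 * k + 1))
      = ((sgen (2 * k + 1) * tgen (2 * k + 1)) ^ k * sgen (2 * k + 1))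
        * ((tgen (2 * k + 1) * sgen (2 * k + 1)) ^ k * tgen (2 * k + 1)) := by
        nth_rewrite 2 [odd_hrel (2 * k + 1) k rfl hk]
        rfl
    _ = (((sgen (2 * k + 1) * tgen (2 * k + 1)) ^ k * sgen (2 * k + 1))
        * (tgen (2 * k + 1) * sgen (2 * k + 1)) ^ k) * tgen (2 * k + 1) := by
        group
    _ = ((sgen (2 * k + 1) * tgen (2 * k + 1)) ^ k
        * ((sgen (2 * k + 1) * tgen (2 * k + 1)) ^ k * sgen (2 * k + 1))) * tgen (2 * k + 1) := by
        rw [(semiD.pow_right k).eq]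
    _ = (sgen (2 * k + 1) * tgen (2 * k + 1)) ^ k
        * ((sgen (2 * k + 1) * tgen (2 * k + 1)) ^ k
          * (sgen (2 * k + 1) * tgen (2 * k + 1))) := by
        group
    _ = (sgen (2 * k + 1) * tgen (2 * k + 1)) ^ (2 * k + 1) := by
        rw [← pow_succ, ← pow_add]
        congr 1
        omega

theorem odd_abz (m : ℕ) :
    abm m ((sgen m * tgen m) ^ m) = Multiplicative.ofAdd (2 * m : ℤ) := by
  rw [map_pow, map_mul, abm_sgen, abm_tgen, ← ofAdd_add, ← ofAdd_nsmul]
  congr 1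
  simp [nsmul_eq_mul]
  ring

theorem odd_hker (m k : ℕ) (hmk : m = 2 * k + 1) (hk : 1 ≤ k) :
    ∀ h, piO m k hmk hk h = 1 → abm m h = 1 → h = 1 := by
  haveI hN : (Subgroup.zpowers (((sgen m * tgen m) ^ k * sgen m)
      * ((sgen m * tgen m) ^ k * sgen m))).Normal :=
    zpowers_normal_of_central _ (odd_central m k hmk hk)
  set N := Subgroup.zpowers (((sgen m * tgen m) ^ k * sgen m)
      * ((sgen m * tgen m) ^ k * sgen m)) with hNdef
  have hbm : ((QuotientGroup.mk' N) (sgen m * tgen m)) ^ m = 1 := by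
    rw [← map_pow, odd_z_eq m k hmk hk]
    exact (QuotientGroup.eq_one_iff _).mpr (Subgroup.mem_zpowers _)
  have hD2 : ((QuotientGroup.mk' N) ((sgen m * tgen m) ^ k * sgen m)) ^ 2 = 1 := by
    rw [← map_pow, pow_two]
    exact (QuotientGroup.eq_one_iff _).mpr (Subgroup.mem_zpowers _)
  have habz : abm m (((sgen m * tgen m) ^ k * sgen m)
      * ((sgen m * tgen m) ^ k * sgen m)) = Multiplicative.ofAdd (2 * m : ℤ) := by
    rw [← odd_z_eq m k hmk hk]
    exact odd_abz m
  refine hker_gen (abm m) (((sgen m * tgen m) ^ k * sgen m)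
      * ((sgen m * tgen m) ^ k * sgen m)) N hNdef (2 * m : ℤ) (by omega) habz
    (piO m k hmk hk)
    (Monoid.CoprodI.lift (fun b => Bool.rec
      (motive := fun b => GF m 2 b →* _)
      (cycHom 2 (QuotientGroup.mk' N ((sgen m * tgen m) ^ k * sgen m)) hD2)
      (cycHom m (QuotientGroup.mk' N (sgen m * tgen m)) hbm) b)) ?_
  apply PresentedGroup.ext
  intro b
  have hfb : Monoid.CoprodI.lift (fun b => Bool.rec
      (motive := fun b => GF m 2 b →* _)
      (cycHom 2 (QuotientGroup.mk' N ((sgen m * tgen m) ^ k * sgen m)) hD2)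
      (cycHom m (QuotientGroup.mk' N (sgen m * tgen m)) hbm) b) (of (bO m))
      = QuotientGroup.mk' N (sgen m * tgen m) := by
    rw [Monoid.CoprodI.lift_of]
    exact cycHom_of m _ hbm
  have hfy : Monoid.CoprodI.lift (fun b => Bool.rec
      (motive := fun b => GF m 2 b →* _)
      (cycHom 2 (QuotientGroup.mk' N ((sgen m * tgen m) ^ k * sgen m)) hD2)
      (cycHom m (QuotientGroup.mk' N (sgen m * tgen m)) hbm) b) (of (yO m))
      = QuotientGroup.mk' N ((sgen m * tgen m) ^ k * sgen m) := by
    rw [Monoid.CoprodI.lift_of]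
    exact cycHom_of 2 _ hD2
  cases b
  · show (Monoid.CoprodI.lift _) (piO m k hmk hk (tgen m))
      = QuotientGroup.mk' N (tgen m)
    rw [piO_t, TO, map_mul, map_pow, hfy, hfb, ← map_pow, ← map_mul]
    have h5 : ((sgen m * tgen m) ^ k * sgen m) * (sgen m * tgen m) ^ (k + 1)
        = (((sgen m * tgen m) ^ k * sgen m) * ((sgen m * tgen m) ^ k * sgen m)) * tgen m := by
      have h6 : (sgen m * tgen m) ^ (k + 1) = ((sgen m * tgen m) ^ k * sgen m) * tgen m := by
        rw [pow_succ, ← mul_assoc]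
      rw [h6, ← mul_assoc]
    rw [h5, map_mul]
    have h7 : QuotientGroup.mk' N (((sgen m * tgen m) ^ k * sgen m)
        * ((sgen m * tgen m) ^ k * sgen m)) = 1 :=
      (QuotientGroup.eq_one_iff _).mpr (Subgroup.mem_zpowers _)
    rw [h7, one_mul]
  · show (Monoid.CoprodI.lift _) (piO m k hmk hk (sgen m))
      = QuotientGroup.mk' N (sgen m)
    rw [piO_s, SO, map_mul, of_xO, map_inv, map_pow, hfb, hfy, ← map_pow, ← map_inv,
      ← map_mul]
    have h8 : ((sgen m * tgen m) ^ k)⁻¹ * ((sgen m * tgen m) ^ k * sgen m) = sgen m :=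
      inv_mul_cancel_left _ _
    rw [h8]

theorem odd_main (m k : ℕ) (hmk : m = 2 * k + 1) (hk : 1 ≤ k) :
    (∀ g : ArtinGroup (dihedralM m),
        conjSub g (Subgroup.zpowers (agen (dihedralM m) true)) =
          Subgroup.zpowers (agen (dihedralM m) true) ∨
        conjSub g (Subgroup.zpowers (agen (dihedralM m) true)) ⊓
          Subgroup.zpowers (agen (dihedralM m) true) = ⊥) ∧
    (∃ g : ArtinGroup (dihedralM m),
        conjSub g (Subgroup.zpowers (agen (dihedralM m) true)) ≠
          Subgroup.zpowers (agen (dihedralM m) true)) ∧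
    WeaklyMalnormal (Subgroup.zpowers (agen (dihedralM m) true)) := by
  apply master m (by omega) _ (piO m k hmk hk)
  · intro q n hq
    rw [piO_s, SO] at hq ⊢
    exact key_comm (xO m k) (yO m) (xO_ne m k hk (by omega)) (yO_ne m) q hq
  · rw [piO_s, piO_t]
    intro hEq
    rw [odd_ST, odd_TS] at hEq
    apply conj_ne_of (bO m) (yO m) (bO_ne m (by omega)) (yO_ne m)
    rw [of_yO_inv]
    exact hEq.symm
  · exact odd_hker m k hmk hk

end OddCase


/-- In the dihedral Artin group `A = ⟨s, t ∣ Π(s,t;m) = Π(t,s;m)⟩` with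
`3 ≤ m < ∞`: for every `g ∈ A` either `g⟨s⟩g⁻¹ = ⟨s⟩` or `g⟨s⟩g⁻¹ ∩ ⟨s⟩ = {1}`; moreover
some `g` satisfies `g⟨s⟩g⁻¹ ≠ ⟨s⟩`. In particular `⟨s⟩` is weakly malnormal in `A`. -/
theorem dihedral_weaklyMalnormal (m : ℕ) (hm : 3 ≤ m) :
    (∀ g : ArtinGroup (dihedralM m),
        conjSub g (Subgroup.zpowers (agen (dihedralM m) true)) =
          Subgroup.zpowers (agen (dihedralM m) true) ∨
        conjSub g (Subgroup.zpowers (agen (dihedralM m) true)) ⊓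
          Subgroup.zpowers (agen (dihedralM m) true) = ⊥) ∧
    (∃ g : ArtinGroup (dihedralM m),
        conjSub g (Subgroup.zpowers (agen (dihedralM m) true)) ≠
          Subgroup.zpowers (agen (dihedralM m) true)) ∧
    WeaklyMalnormal (Subgroup.zpowers (agen (dihedralM m) true)) := by
  rcases Nat.even_or_odd m with he | ho
  · obtain ⟨k, hk⟩ := he
    have h2 : m = 2 * k := by omega
    subst h2
    exact even_main k (by omega)
  · obtain ⟨k, hk⟩ := ho
    subst hk
    exact odd_main (2 * k + 1) k rfl (by omega)

end ArtinPaper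
end

section
/- Let A_Γ be an Artin group and let s, t ∈ S be distinct generators. If t normalizes the cyclic subgroup ⟨s⟩, i.e. t⟨s⟩t⁻¹ = ⟨s⟩, then s and t are joined in Γ by an edge labelled 2 (equivalently, st = ts in A_Γ). -/
namespace ArtinPaper
open Real

lemma trig2 (x t : ℝ) : Real.sin (x + t) = 2 * Real.cos t * Real.sin x - Real.sin (x - t) := by
  rw [Real.sin_add, Real.sin_sub]; ring

lemma trig1 (x t : ℝ) :
    Real.sin (x + 2*t) = Real.sin x * (4 * Real.cos t ^ 2 - 1) - 2 * Real.cos t * Real.sin (x - t) := by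
  have h2 : x + 2*t = (x + t) + t := by ring
  rw [h2, Real.sin_add, Real.sin_add, Real.cos_add, Real.sin_sub]
  linear_combination (-Real.sin x) * (Real.sin_sq_add_cos_sq t)

lemma altprod_closed {G : Type*} [Group G] (x y : G) (m : ℕ) :
    ((List.range m).map (fun i => if i % 2 = 0 then x else y)).prod =
      (x*y)^(m/2) * (if m % 2 = 0 then 1 else x) := by
  induction m with
  | zero => simp
  | succ n ih =>
    rw [List.range_succ, List.map_append, List.prod_append, ih]
    rcases Nat.even_or_odd n with he | ho
    · have h1 : n % 2 = 0 := Nat.even_iff.mp he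
      have h2 : (n+1) % 2 = 1 := by omega
      have h3 : (n+1)/2 = n/2 := by omega
      simp [h1, h2, h3]
    · have h1 : n % 2 = 1 := Nat.odd_iff.mp ho
      have h2 : (n+1) % 2 = 0 := by omega
      have h3 : (n+1)/2 = n/2 + 1 := by omega
      simp [h1, h2, h3, pow_succ, mul_assoc]

lemma altprod_braid {G : Type*} [Group G] (x y : G) (hx : x*x = 1) (hy : y*y = 1)
    (m : ℕ) (h : (x*y)^m = 1) :
    ((List.range m).map (fun i => if i % 2 = 0 then x else y)).prod =
      ((List.range m).map (fun i => if i % 2 = 0 then y else x)).prod := by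
  have hyx : y * x = (x*y)⁻¹ := by
    rw [mul_inv_rev, inv_eq_of_mul_eq_one_left hx, inv_eq_of_mul_eq_one_left hy]
  rw [altprod_closed, altprod_closed, hyx, inv_pow]
  rcases Nat.even_or_odd m with he | ho
  · have h1 : m % 2 = 0 := Nat.even_iff.mp he
    have h2 : m / 2 + m / 2 = m := by omega
    simp only [h1, reduceIte, mul_one]
    rw [eq_inv_iff_mul_eq_one, ← pow_add, h2, h]
  · have h1 : m % 2 = 1 := Nat.odd_iff.mp ho
    simp only [h1, one_ne_zero, reduceIte]
    have key : (x*y)^(m/2+m/2) = y*x := by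
      have hm : m/2 + m/2 + 1 = m := by omega
      have h' : (x*y)^(m/2+m/2) * (x*y) = 1 := by rw [← pow_succ, hm]; exact h
      rw [hyx]
      exact eq_inv_of_mul_eq_one_left h'
    rw [eq_comm, inv_mul_eq_iff_eq_mul, ← mul_assoc, ← pow_add, key, mul_assoc, hx, mul_one]

section Refl
variable {α : Type*} [Fintype α] [DecidableEq α]

noncomputable def cmat (M : α → α → ℕ) (u v : α) : ℝ :=
  if u = v then 1 else if M u v = 0 then -1 else -Real.cos (Real.pi / (M u v))

lemma cmat_self (M : α → α → ℕ) (u : α) : cmat M u u = 1 := by simp [cmat]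

lemma cmat_symm (M : α → α → ℕ) (hsym : ∀ s t, M s t = M t s) (u v : α) :
    cmat M u v = cmat M v u := by
  unfold cmat
  rcases eq_or_ne u v with rfl | h
  · rfl
  · rw [if_neg h, if_neg (Ne.symm h), hsym]

def evec (u : α) : α → ℝ := Pi.single u 1

lemma evec_apply (u v : α) : evec u v = if v = u then (1:ℝ) else 0 := by
  simp [evec, Pi.single_apply]

noncomputable def bform (M : α → α → ℕ) (x : α → ℝ) (u : α) : ℝ := ∑ w, x w * cmat M w u

lemma bform_single (M : α → α → ℕ) (w u : α) : bform M (evec w) u = cmat M w u := by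
  unfold bform
  rw [Finset.sum_eq_single w]
  · simp [evec]
  · intro b _ hb; simp [evec_apply, hb]
  · simp

lemma bform_add (M : α → α → ℕ) (x y : α → ℝ) (u : α) :
    bform M (x + y) u = bform M x u + bform M y u := by
  unfold bform
  rw [← Finset.sum_add_distrib]
  exact Finset.sum_congr rfl (fun w _ => by simp [add_mul])

lemma bform_smul (M : α → α → ℕ) (r : ℝ) (x : α → ℝ) (u : α) :
    bform M (r • x) u = r * bform M x u := by
  unfold bform
  rw [Finset.mul_sum]
  exact Finset.sum_congr rfl (fun w _ => by simp [mul_assoc])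

lemma bform_sub (M : α → α → ℕ) (x y : α → ℝ) (u : α) :
    bform M (x - y) u = bform M x u - bform M y u := by
  unfold bform
  rw [← Finset.sum_sub_distrib]
  exact Finset.sum_congr rfl (fun w _ => by simp [sub_mul])

noncomputable def refl (M : α → α → ℕ) (u : α) : (α → ℝ) →ₗ[ℝ] (α → ℝ) where
  toFun x := x - (2 * bform M x u) • evec u
  map_add' x y := by
    rw [bform_add]; module
  map_smul' r x := by
    rw [bform_smul]
    simp only [RingHom.id_apply]
    module

lemma refl_apply (M : α → α → ℕ) (u : α) (x : α → ℝ) :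
    refl M u x = x - (2 * bform M x u) • evec u := rfl

lemma refl_single (M : α → α → ℕ) (u w : α) :
    refl M u (evec w) = evec w - (2 * cmat M w u) • evec u := by
  rw [refl_apply, bform_single]

lemma refl_refl (M : α → α → ℕ) (u : α) (x : α → ℝ) :
    refl M u (refl M u x) = x := by
  rw [refl_apply, refl_apply, bform_sub, bform_smul, bform_single, cmat_self]
  module

lemma refl_fixed (M : α → α → ℕ) (u : α) (x : α → ℝ) (h : bform M x u = 0) :
    refl M u x = x := by
  rw [refl_apply, h]; simp

end Refl



variable {α : Type*} [Fintype α] [DecidableEq α]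

theorem reflpair_pow (M : α → α → ℕ) (hsym : ∀ s t, M s t = M t s) (u v : α)
    (hm : 2 ≤ M u v) (huv : u ≠ v) :
    (refl M u * refl M v) ^ (M u v) = 1 := by
  set m := M u v with hmdef
  have hm0 : (m:ℝ) ≠ 0 := Nat.cast_ne_zero.mpr (by omega)
  have hm2 : (2:ℝ) ≤ (m:ℝ) := by exact_mod_cast hm
  set θ := Real.pi / m with hθdef
  have hθpos : 0 < θ := div_pos Real.pi_pos (by linarith)
  have hθle : θ ≤ Real.pi / 2 := by
    rw [hθdef]
    apply div_le_div_of_nonneg_left Real.pi_pos.le (by norm_num) hm2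
  have hθlt : θ < Real.pi := lt_of_le_of_lt hθle (by linarith [Real.pi_pos])
  have hsin : 0 < Real.sin θ := Real.sin_pos_of_pos_of_lt_pi hθpos hθlt
  have hcos : 0 ≤ Real.cos θ := Real.cos_nonneg_of_mem_Icc ⟨by linarith, hθle⟩
  have hc : cmat M u v = -Real.cos θ := by
    unfold cmat
    rw [if_neg huv, if_neg (by omega), ← hmdef, ← hθdef]
  have hcvu : cmat M v u = cmat M u v := (cmat_symm M hsym u v).symm
  have hpyth := Real.sin_sq_add_cos_sq θ
  have hc2 : 1 - (cmat M u v)^2 ≠ 0 := by rw [hc]; nlinarith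
  set ρ := refl M u * refl M v with hρdef
  -- action on the plane
  have plane : ∀ a b : ℝ, ρ (a • evec u + b • evec v) =
      ((4*(cmat M u v)^2-1)*a + 2*(cmat M u v)*b) • evec u +
        (-(2*(cmat M u v))*a - b) • evec v := by
    intro a b
    rw [hρdef]
    simp only [Module.End.mul_apply, map_add, map_smul, map_sub, refl_single, cmat_self, hcvu,
      smul_sub, smul_smul]
    module
  -- fixed vectors
  have fixpt : ∀ (x : α → ℝ), bform M x u = 0 → bform M x v = 0 → ∀ k : ℕ, (ρ^k) x = x := by
    intro x h1 h2
    have hstep : ρ x = x := by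
      rw [hρdef, Module.End.mul_apply, refl_fixed M v x h2, refl_fixed M u x h1]
    intro k
    induction k with
    | zero => simp
    | succ n ih => rw [pow_succ, Module.End.mul_apply, hstep, ih]
  -- the trigonometric induction
  have main : ∀ k : ℕ,
      (ρ^k) (Real.sin θ • evec u) =
        Real.sin ((2*(k:ℝ)+1)*θ) • evec u + Real.sin ((2*(k:ℝ))*θ) • evec v ∧
      (ρ^k) (Real.sin θ • evec v) =
        (-Real.sin ((2*(k:ℝ))*θ)) • evec u + (-Real.sin ((2*(k:ℝ)-1)*θ)) • evec v := by
    intro k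
    induction k with
    | zero =>
      constructor
      · norm_num
      · push_cast
        rw [show (2*(0:ℝ))*θ = 0 by ring, show (2*(0:ℝ)-1)*θ = -θ by ring]
        simp [Real.sin_neg]
    | succ n ih =>
      obtain ⟨ih1, ih2⟩ := ih
      have e1 : (2*((n:ℝ)+1)+1)*θ = (2*(n:ℝ)+1)*θ + 2*θ := by ring
      have e2 : (2*((n:ℝ)+1))*θ = (2*(n:ℝ))*θ + 2*θ := by ring
      have e3 : (2*((n:ℝ)+1))*θ = (2*(n:ℝ)+1)*θ + θ := by ring
      have e4 : (2*((n:ℝ)+1)-1)*θ = (2*(n:ℝ))*θ + θ := by ring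
      have f1 : (2*(n:ℝ)+1)*θ - θ = (2*(n:ℝ))*θ := by ring
      have f2 : (2*(n:ℝ))*θ - θ = (2*(n:ℝ)-1)*θ := by ring
      constructor
      · rw [pow_succ', Module.End.mul_apply, ih1, plane, hc]
        push_cast
        rw [e1, e3, trig1, trig2, f1]
        module
      · rw [pow_succ', Module.End.mul_apply, ih2, plane, hc]
        push_cast
        rw [e2, e4, trig1, trig2, f2]
        module
  -- evaluate at k = m
  have h2pi : (2*(m:ℝ))*θ = 2*Real.pi := by
    rw [hθdef]; field_simp
  have s1 : Real.sin ((2*(m:ℝ)+1)*θ) = Real.sin θ := by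
    rw [show (2*(m:ℝ)+1)*θ = θ + (2*(m:ℝ))*θ by ring, h2pi, Real.sin_add_two_pi]
  have s2 : Real.sin ((2*(m:ℝ))*θ) = 0 := by rw [h2pi, Real.sin_two_pi]
  have s3 : Real.sin ((2*(m:ℝ)-1)*θ) = -Real.sin θ := by
    rw [show (2*(m:ℝ)-1)*θ = (2*(m:ℝ))*θ - θ by ring, h2pi, Real.sin_sub, Real.sin_two_pi,
      Real.cos_two_pi]
    ring
  have hmu : (ρ^m) (evec u) = evec u := by
    have h := (main m).1
    rw [map_smul, s1, s2] at h
    apply smul_right_injective (α → ℝ) (ne_of_gt hsin)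
    show Real.sin θ • ((ρ^m) (evec u)) = Real.sin θ • evec u
    rw [h]; module
  have hmv : (ρ^m) (evec v) = evec v := by
    have h := (main m).2
    rw [map_smul, s2, s3] at h
    apply smul_right_injective (α → ℝ) (ne_of_gt hsin)
    show Real.sin θ • ((ρ^m) (evec v)) = Real.sin θ • evec v
    rw [h]; module
  -- conclude
  refine LinearMap.ext (fun x => ?_)
  rw [Module.End.one_apply]
  set d1 := bform M x u with hd1
  set d2 := bform M x v with hd2
  set c := cmat M u v with hcdef
  set a := (d1 - c*d2)/(1-c^2) with hadef
  set b := (d2 - c*d1)/(1-c^2) with hbdef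
  have hwu : bform M (x - a • evec u - b • evec v) u = 0 := by
    rw [bform_sub, bform_sub, bform_smul, bform_smul, bform_single, bform_single, cmat_self,
      hcvu, hadef, hbdef]
    field_simp
    ring

  have hwv : bform M (x - a • evec u - b • evec v) v = 0 := by
    rw [bform_sub, bform_sub, bform_smul, bform_smul, bform_single, bform_single, cmat_self,
      ← hcdef, hadef, hbdef]
    field_simp
    ring
  have hx : x = (x - a • evec u - b • evec v) + a • evec u + b • evec v := by module
  conv_lhs => rw [hx]
  rw [map_add, map_add, map_smul, map_smul, hmu, hmv, fixpt _ hwu hwv m, ← hx]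




variable {α : Type*} [Fintype α] [DecidableEq α]

noncomputable def sigma (M : α → α → ℕ) (u : α) : ((α → ℝ) →ₗ[ℝ] (α → ℝ))ˣ where
  val := refl M u
  inv := refl M u
  val_inv := LinearMap.ext fun x => by rw [Module.End.mul_apply, refl_refl, Module.End.one_apply]
  inv_val := LinearMap.ext fun x => by rw [Module.End.mul_apply, refl_refl, Module.End.one_apply]

lemma sigma_mul_self (M : α → α → ℕ) (u : α) : sigma M u * sigma M u = 1 :=
  Units.ext (LinearMap.ext fun x => by
    rw [Units.val_mul]
    rw [show ((sigma M u : ((α → ℝ) →ₗ[ℝ] (α → ℝ))ˣ) : ((α → ℝ) →ₗ[ℝ] (α → ℝ))) = refl M u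
      from rfl]
    rw [Module.End.mul_apply, refl_refl]
    rfl)

lemma sigma_braid (M : α → α → ℕ) (hsym : ∀ s t, M s t = M t s) (u v : α)
    (hm : 2 ≤ M u v) (huv : u ≠ v) :
    (sigma M u * sigma M v) ^ (M u v) = 1 := by
  apply Units.ext
  rw [Units.val_pow_eq_pow_val, Units.val_mul]
  exact reflpair_pow M hsym u v hm huv

lemma lift_braidWord_s12 {G : Type*} [Group G] (f : α → G) (m : ℕ) (p q : α) :
    FreeGroup.lift f (braidWord m p q) =
      ((List.range m).map (fun i => if i % 2 = 0 then f p else f q)).prod := by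
  unfold braidWord
  rw [map_list_prod, List.map_map]
  have hfun : (⇑(FreeGroup.lift f) ∘ fun i => if i % 2 = 0 then FreeGroup.of p else FreeGroup.of q)
      = (fun i => if i % 2 = 0 then f p else f q) := by
    funext i
    by_cases h : i % 2 = 0 <;> simp [h]
  rw [hfun]



end ArtinPaper

namespace ArtinPaper

set_option maxHeartbeats 1000000 in
/-- If `s ≠ t` are generators of an Artin group and `t` normalizes the
cyclic subgroup `⟨s⟩`, then `s` and `t` are joined in `Γ` by an edge labelled `2`. -/
theorem label_eq_two_of_normalizes {α : Type*} [Fintype α] (M : α → α → ℕ)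
    (hsym : ∀ s t, M s t = M t s) (hdiag : ∀ s, M s s = 0)
    (hlab : ∀ s t, s ≠ t → M s t = 0 ∨ 2 ≤ M s t)
    (s t : α) (hst : s ≠ t)
    (hnorm : conjSub (agen M t) (Subgroup.zpowers (agen M s)) =
      Subgroup.zpowers (agen M s)) :
    M s t = 2 := by
  letI := Classical.decEq α
  -- Step 1: the homomorphism to ℤ shows that `t (agen s) t⁻¹ = agen s`.
  have hrelZ : ∀ r ∈ artinRels M,
      FreeGroup.lift (fun _ : α => Multiplicative.ofAdd (1:ℤ)) r = 1 := by
    rintro r ⟨p, q, hpq, rfl⟩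
    rw [map_mul, map_inv, mul_inv_eq_one, lift_braidWord_s12, lift_braidWord_s12]
  let lam := PresentedGroup.toGroup hrelZ
  have hmem : agen M t * agen M s * (agen M t)⁻¹ ∈ Subgroup.zpowers (agen M s) := by
    have h1 : (MulAut.conj (agen M t)).toMonoidHom (agen M s) ∈
        conjSub (agen M t) (Subgroup.zpowers (agen M s)) :=
      Subgroup.mem_map_of_mem _ (Subgroup.mem_zpowers _)
    rw [hnorm] at h1
    simpa [MulAut.conj_apply, mul_assoc] using h1
  obtain ⟨k, hk⟩ := Subgroup.mem_zpowers_iff.mp hmem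
  have hlamgen : ∀ u : α, lam (agen M u) = Multiplicative.ofAdd (1:ℤ) := fun u =>
    PresentedGroup.toGroup.of hrelZ
  have hk1 : k = 1 := by
    have h2 := congrArg lam hk
    rw [map_zpow, map_mul, map_mul, map_inv, hlamgen, hlamgen] at h2
    have h3 : Multiplicative.ofAdd (k : ℤ) = Multiplicative.ofAdd (1 : ℤ) := by
      simpa [← ofAdd_zsmul] using h2
    exact_mod_cast Multiplicative.ofAdd.injective h3
  rw [hk1, zpow_one] at hk
  have hcommA : agen M s * agen M t = agen M t * agen M s := by
    conv_lhs => rw [hk]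
    group
  -- Step 2: the reflection representation.
  have hrelU : ∀ r ∈ artinRels M, FreeGroup.lift (sigma M) r = 1 := by
    rintro r ⟨p, q, hpq, rfl⟩
    rw [map_mul, map_inv, mul_inv_eq_one, lift_braidWord_s12, lift_braidWord_s12]
    have hpq' : p ≠ q := by
      intro h; rw [h, hdiag] at hpq; omega
    exact altprod_braid _ _ (sigma_mul_self M p) (sigma_mul_self M q) _
      (sigma_braid M hsym p q hpq hpq')
  let psi := PresentedGroup.toGroup hrelU
  have hpsigen : ∀ u : α, psi (agen M u) = sigma M u := fun u =>
    PresentedGroup.toGroup.of hrelU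
  have hcommU : sigma M s * sigma M t = sigma M t * sigma M s := by
    have := congrArg psi hcommA
    rwa [map_mul, map_mul, hpsigen, hpsigen] at this
  have hsqU : (sigma M s * sigma M t) * (sigma M s * sigma M t) = 1 := by
    calc (sigma M s * sigma M t) * (sigma M s * sigma M t)
        = sigma M s * (sigma M t * sigma M s) * sigma M t := by group
      _ = sigma M s * (sigma M s * sigma M t) * sigma M t := by rw [← hcommU]
      _ = (sigma M s * sigma M s) * (sigma M t * sigma M t) := by group
      _ = 1 := by rw [sigma_mul_self, sigma_mul_self, one_mul]
  have hEnd : (refl M s * refl M t) * (refl M s * refl M t) = (1 : (α → ℝ) →ₗ[ℝ] (α → ℝ)) := by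
    have h := congrArg (Units.val) hsqU
    rw [Units.val_one] at h
    exact h
  -- Step 3: evaluate on the basis vector `evec s`.
  set c := cmat M s t with hcdef
  have hcts : cmat M t s = c := (cmat_symm M hsym s t).symm
  set ρ := refl M s * refl M t with hρdef
  have hρes : ρ (evec s) = (4*c^2-1) • evec s + (-(2*c)) • evec t := by
    rw [hρdef, Module.End.mul_apply, refl_single, map_sub, map_smul, refl_single, refl_single,
      cmat_self, hcts, ← hcdef]
    module
  have hρet : ρ (evec t) = (2*c) • evec s + (-1:ℝ) • evec t := by
    rw [hρdef, Module.End.mul_apply, refl_single, cmat_self, map_sub, map_smul, refl_single,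
      hcts]
    module
  have h2 : ρ (ρ (evec s)) = evec s := by
    have := congrArg (fun f : (α → ℝ) →ₗ[ℝ] (α → ℝ) => f (evec s)) hEnd
    simpa [Module.End.mul_apply] using this
  rw [hρes, map_add, map_smul, map_smul, hρes, hρet] at h2
  have hes : ((4*c^2-1) • ((4*c^2-1) • evec s + (-(2*c)) • evec t) +
      (-(2*c)) • ((2*c) • evec s + (-1:ℝ) • evec t)) s = evec s s := by rw [h2]
  have het : ((4*c^2-1) • ((4*c^2-1) • evec s + (-(2*c)) • evec t) +
      (-(2*c)) • ((2*c) • evec s + (-1:ℝ) • evec t)) t = evec s t := by rw [h2]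
  simp only [Pi.add_apply, Pi.smul_apply, evec_apply, if_pos rfl, if_neg hst,
    if_neg (Ne.symm hst), smul_eq_mul] at hes het
  norm_num at hes het
  -- Step 4: bound on `c` and contradiction.
  by_contra hne
  have hcle : c ≤ -(1/2 : ℝ) := by
    rcases hlab s t hst with h0 | h2le
    · have : c = -1 := by rw [hcdef]; unfold cmat; rw [if_neg hst, if_pos h0]
      rw [this]; norm_num
    · have h3le : 3 ≤ M s t := by omega
      have hcc : c = -Real.cos (Real.pi / (M s t)) := by
        rw [hcdef]; unfold cmat; rw [if_neg hst, if_neg (by omega)]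
      have hm3 : (3:ℝ) ≤ (M s t : ℝ) := by exact_mod_cast h3le
      have hcosge : (1/2 : ℝ) ≤ Real.cos (Real.pi / (M s t)) := by
        rw [← Real.cos_pi_div_three]
        apply Real.cos_le_cos_of_nonneg_of_le_pi
        · positivity
        · linarith [Real.pi_pos]
        · rw [div_le_div_iff₀ (by linarith) (by norm_num)]
          nlinarith [Real.pi_pos]
      rw [hcc]; linarith
  have hc0 : c < 0 := by linarith
  have hfac : c * (4 - 8*c^2) = 0 := by linear_combination het
  rcases mul_eq_zero.mp hfac with h | h
  · linarith
  · have hc2 : c^2 = 1/2 := by linarith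
    nlinarith [hes, hc2]

end ArtinPaper
end

section
/- Let Γ be a simple graph and let Ω be a 2-convex set of vertices of Γ. Let T be any set of vertices of Γ such that every pair of distinct vertices of T is either adjacent in Γ or entirely contained in Ω. Then either T ⊆ Ω or T is a clique of Γ. (Equivalently, the simplicial complex L_U whose simplices are the cliques of Γ together with the finite subsets of Ω is a flag simplicial complex.) -/
namespace ArtinPaper

/-- Let `Ω` be a `2`-convex set of vertices of a simple graph `G`, and
let `T` be a set of vertices such that every pair of distinct vertices of `T` is either
adjacent in `G` or entirely contained in `Ω`. Then `T ⊆ Ω` or `T` is a clique of `G`.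
(This says exactly that the complex whose simplices are the cliques of `G` together with
the subsets of `Ω` is flag.) -/
theorem subset_or_clique_of_twoConvex {V : Type*} (G : SimpleGraph V) (Ω : Set V)
    (hconv : ∀ u ∈ Ω, ∀ w ∈ Ω, ∀ v : V,
      u ≠ w → ¬ G.Adj u w → G.Adj u v → G.Adj v w → v ∈ Ω)
    (T : Set V)
    (hT : ∀ u ∈ T, ∀ w ∈ T, u ≠ w → G.Adj u w ∨ (u ∈ Ω ∧ w ∈ Ω)) :
    T ⊆ Ω ∨ G.IsClique T := by
  by_cases hclique : G.IsClique T
  · exact Or.inr hclique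
  · left
    rw [SimpleGraph.isClique_iff, Set.Pairwise] at hclique
    push_neg at hclique
    obtain ⟨u, hu, w, hw, hne, hnadj⟩ := hclique
    have huw : u ∈ Ω ∧ w ∈ Ω := (hT u hu w hw hne).resolve_left hnadj
    intro v hv
    by_cases hvu : v = u
    · exact hvu ▸ huw.1
    by_cases hvw : v = w
    · exact hvw ▸ huw.2
    rcases hT u hu v hv (Ne.symm hvu) with h1 | h1
    · rcases hT v hv w hw hvw with h2 | h2
      · exact hconv u huw.1 w huw.2 v hne hnadj h1 h2
      · exact h2.1
    · exact h1.2

end ArtinPaper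
end
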